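/- arXiv:1104.4630 — 7 statements merged into one kernel-verified Lean document; each statement's English description precedes it below -/
import Mathlib

section
/- Pentagon relation for the Rogers dilogarithm: for all real numbers x, y with 0 ≤ x ≤ 1, 0 ≤ y ≤ 1 and x·y < 1, one has L(x) + L(y) = L(x(1−y)/(1−xy)) + L(xy) + L(y(1−x)/(1−xy)). -/
open Real

/-- The Rogers dilogarithm, defined for `0 ≤ x ≤ 1` by
`L(x) = -(1/2) ∫₀ˣ (log(1-y)/y + log(y)/(1-y)) dy`. -/
noncomputable def rogersL (x : ℝ) : ℝ :=
  -(1 / 2) * ∫ y in (0:ℝ)..x, (Real.log (1 - y) / y + Real.log y / (1 - y))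

/-!
For fixed `y ∈ (0, 1)` the defect `L x + L y - (L a + L (x y) + L c)` of the pentagon relation
vanishes at `x = 0` and, by the fundamental theorem of calculus, has derivative
`-(1/2) (f x - f a · a' - f (x y) · y - f c · c')` on `(0, 1)`, where `f` is the integrand.
Writing `1 - a = (1 - x) / (1 - x y)`, `1 - c = (1 - y) / (1 - x y)` and expanding the logarithms
turns this into a rational identity in `log x`, `log (1 - x)`, `log y`, `log (1 - y)` and
`log (1 - x y)`, so the defect is constant. The integrand is integrable on `[0, 1]` because
`|log t / (1 - t)| ≤ 1 - log t` there and the other summand is its reflection under `t ↦ 1 - t`.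
-/

namespace RogersL

open MeasureTheory Set

noncomputable def integrand (t : ℝ) : ℝ := log (1 - t) / t + log t / (1 - t)

@[simp] theorem rogersL_zero : rogersL 0 = 0 := by simp [rogersL]

theorem abs_log_div_one_sub_le {t : ℝ} (ht0 : 0 < t) (ht1 : t ≤ 1) :
    |log t / (1 - t)| ≤ 1 - log t := by
  rcases ht1.eq_or_lt with rfl | ht1
  · simp
  have hlog : log t ≤ 0 := log_nonpos ht0.le ht1.le
  have htlog : t - 1 ≤ t * log t := by
    have := one_sub_inv_le_log_of_pos ht0
    rw [← sub_nonneg] at this ⊢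
    calc 0 ≤ t * (log t - (1 - t⁻¹)) := mul_nonneg ht0.le this
      _ = t * log t - (t - 1) := by field_simp
  have h1t : 0 < 1 - t := sub_pos.mpr ht1
  rw [abs_of_nonpos (div_nonpos_of_nonpos_of_nonneg hlog h1t.le), neg_le,
    le_div_iff₀ h1t]
  nlinarith

theorem intervalIntegrable_log_div_one_sub :
    IntervalIntegrable (fun t => log t / (1 - t)) volume 0 1 := by
  refine ((intervalIntegrable_const (c := (1 : ℝ))).sub
    intervalIntegral.intervalIntegrable_log').mono_fun
    (measurable_log.div (measurable_const.sub measurable_id)).aestronglyMeasurable ?_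
  filter_upwards [ae_restrict_mem measurableSet_uIoc] with t ht
  rw [uIoc_of_le zero_le_one] at ht
  have hlog : log t ≤ 0 := log_nonpos ht.1.le ht.2
  rw [Real.norm_eq_abs, Real.norm_eq_abs, abs_of_nonneg (by linarith : 0 ≤ 1 - log t)]
  exact abs_log_div_one_sub_le ht.1 ht.2

theorem intervalIntegrable_integrand : IntervalIntegrable integrand volume 0 1 := by
  have h := intervalIntegrable_log_div_one_sub
  have h' := (h.comp_sub_left 1).symm
  simp only [sub_zero, sub_self, sub_sub_cancel] at h'
  exact h'.add h

theorem continuousOn_integrand : ContinuousOn integrand (Ioo 0 1) := by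
  intro t ⟨ht0, ht1⟩
  have h1t : 1 - t ≠ 0 := (sub_pos.mpr ht1).ne'
  unfold integrand
  fun_prop (disch := first | exact ht0.ne' | exact h1t)

theorem continuousOn_rogersL : ContinuousOn rogersL (Icc 0 1) := by
  have h := intervalIntegral.continuousOn_primitive_interval' intervalIntegrable_integrand
    left_mem_uIcc
  rw [uIcc_of_le zero_le_one] at h
  exact continuousOn_const.mul h

theorem hasDerivAt_rogersL {t : ℝ} (ht : t ∈ Ioo 0 1) :
    HasDerivAt rogersL (-(1 / 2) * integrand t) t := by
  have hint : IntervalIntegrable integrand volume 0 t :=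
    intervalIntegrable_integrand.mono_set <| by
      rw [uIcc_of_le ht.1.le, uIcc_of_le zero_le_one]
      exact Icc_subset_Icc_right ht.2.le
  have hderiv := intervalIntegral.integral_hasDerivAt_right hint
    (continuousOn_integrand.stronglyMeasurableAtFilter isOpen_Ioo t ht)
    (continuousOn_integrand.continuousAt (isOpen_Ioo.mem_nhds ht))
  exact hderiv.const_mul _

theorem _root_.ContinuousOn.rogersL {f : ℝ → ℝ} {s : Set ℝ} (hf : ContinuousOn f s)
    (hs : MapsTo f s (Icc 0 1)) : ContinuousOn (fun t => rogersL (f t)) s :=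
  continuousOn_rogersL.comp hf hs

theorem _root_.HasDerivAt.rogersL {f : ℝ → ℝ} {f' t : ℝ} (hf : HasDerivAt f f' t)
    (ht : f t ∈ Ioo 0 1) :
    HasDerivAt (fun s => rogersL (f s)) (-(1 / 2) * integrand (f t) * f') t :=
  (hasDerivAt_rogersL ht).comp t hf

theorem mul_one_sub_div_mem_Icc {u v : ℝ} (hu0 : 0 ≤ u) (hu1 : u ≤ 1) (hv : v ≤ 1)
    (huv : u * v < 1) : u * (1 - v) / (1 - u * v) ∈ Icc 0 1 := by
  have hd : 0 < 1 - u * v := sub_pos.mpr huv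
  refine ⟨div_nonneg (mul_nonneg hu0 (sub_nonneg.mpr hv)) hd.le, ?_⟩
  rw [div_le_one hd]
  linarith

theorem mul_one_sub_div_mem_Ioo {u v : ℝ} (hu : u ∈ Ioo 0 1) (hv : v ∈ Ioo 0 1) :
    u * (1 - v) / (1 - u * v) ∈ Ioo 0 1 := by
  have hd : 0 < 1 - u * v := sub_pos.mpr (mul_lt_one_of_nonneg_of_lt_one_left hu.1.le hu.2 hv.2.le)
  refine ⟨div_pos (mul_pos hu.1 (sub_pos.mpr hv.2)) hd, ?_⟩
  rw [div_lt_one hd]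
  linarith [hu.2]

theorem integrand_pentagon {t y : ℝ} (ht : t ∈ Ioo 0 1) (hy : y ∈ Ioo 0 1) :
    integrand t =
      integrand (t * (1 - y) / (1 - t * y)) * ((1 - y) / (1 - t * y) ^ 2) +
        integrand (t * y) * y +
        integrand (y * (1 - t) / (1 - t * y)) * (-(y * (1 - y)) / (1 - t * y) ^ 2) := by
  obtain ⟨ht0, ht1⟩ := ht
  obtain ⟨hy0, hy1⟩ := hy
  have h1t : 0 < 1 - t := sub_pos.mpr ht1
  have h1y : 0 < 1 - y := sub_pos.mpr hy1
  have hd : 0 < 1 - t * y := by nlinarith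
  have e1 : 1 - t * (1 - y) / (1 - t * y) = (1 - t) / (1 - t * y) := by
    field_simp; ring
  have e2 : 1 - y * (1 - t) / (1 - t * y) = (1 - y) / (1 - t * y) := by
    rw [one_sub_div hd.ne']; ring
  simp only [integrand, e1, e2]
  rw [log_div (by positivity) hd.ne', log_div (by positivity) hd.ne',
    log_div (by positivity) hd.ne', log_div (by positivity) hd.ne',
    log_mul ht0.ne' h1y.ne', log_mul hy0.ne' h1t.ne', log_mul ht0.ne' hy0.ne']
  field_simp
  ring

noncomputable def pentagonDefect (y t : ℝ) : ℝ :=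
  rogersL t + rogersL y -
    (rogersL (t * (1 - y) / (1 - t * y)) + rogersL (t * y) + rogersL (y * (1 - t) / (1 - t * y)))

theorem pentagonDefect_zero (y : ℝ) : pentagonDefect y 0 = 0 := by
  simp [pentagonDefect]

theorem continuousOn_pentagonDefect {y : ℝ} (hy0 : 0 ≤ y) (hy1 : y < 1) :
    ContinuousOn (pentagonDefect y) (Icc 0 1) := by
  have hd : ∀ t ∈ Icc (0 : ℝ) 1, t * y < 1 := fun t ht =>
    lt_of_le_of_lt (mul_le_of_le_one_left hy0 ht.2) hy1
  have hden : ∀ t ∈ Icc (0 : ℝ) 1, 1 - t * y ≠ 0 := fun t ht => (sub_pos.mpr (hd t ht)).ne'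
  have ha : ContinuousOn (fun t => rogersL (t * (1 - y) / (1 - t * y))) (Icc 0 1) :=
    ContinuousOn.rogersL (by fun_prop (disch := exact hden))
      fun t ht => mul_one_sub_div_mem_Icc ht.1 ht.2 hy1.le (hd t ht)
  have hb : ContinuousOn (fun t => rogersL (t * y)) (Icc 0 1) :=
    ContinuousOn.rogersL (by fun_prop)
      fun t ht => ⟨mul_nonneg ht.1 hy0, (hd t ht).le⟩
  have hc : ContinuousOn (fun t => rogersL (y * (1 - t) / (1 - t * y))) (Icc 0 1) :=
    ContinuousOn.rogersL (by fun_prop (disch := exact hden)) fun t ht => by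
      simpa only [mul_comm t y] using
        mul_one_sub_div_mem_Icc hy0 hy1.le ht.2 (by rw [mul_comm]; exact hd t ht)
  exact (continuousOn_rogersL.add continuousOn_const).sub ((ha.add hb).add hc)

theorem hasDerivAt_pentagonDefect {y t : ℝ} (hy : y ∈ Ioo 0 1) (ht : t ∈ Ioo 0 1) :
    HasDerivAt (pentagonDefect y) 0 t := by
  have hd : 1 - t * y ≠ 0 :=
    (sub_pos.mpr (mul_lt_one_of_nonneg_of_lt_one_left ht.1.le ht.2 hy.2.le)).ne'
  have ha : HasDerivAt (fun s => s * (1 - y) / (1 - s * y)) ((1 - y) / (1 - t * y) ^ 2) t := by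
    refine (((hasDerivAt_id t).mul_const (1 - y)).div
      (((hasDerivAt_id t).mul_const y).const_sub 1) hd).congr_deriv ?_
    simp only [id]
    field_simp
    ring
  have hc : HasDerivAt (fun s => y * (1 - s) / (1 - s * y))
      (-(y * (1 - y)) / (1 - t * y) ^ 2) t := by
    refine ((((hasDerivAt_id t).const_sub 1).const_mul y).div
      (((hasDerivAt_id t).mul_const y).const_sub 1) hd).congr_deriv ?_
    simp only [id]
    field_simp
    ring
  have hb : HasDerivAt (fun s => s * y) y t := hasDerivAt_mul_const y
  have hcy : y * (1 - t) / (1 - t * y) ∈ Ioo 0 1 := by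
    simpa only [mul_comm t y] using mul_one_sub_div_mem_Ioo hy ht
  have hbt : t * y ∈ Ioo 0 1 :=
    ⟨mul_pos ht.1 hy.1, mul_lt_one_of_nonneg_of_lt_one_left ht.1.le ht.2 hy.2.le⟩
  refine (((hasDerivAt_rogersL ht).add_const (rogersL y)).sub
    (((ha.rogersL (mul_one_sub_div_mem_Ioo ht hy)).add (hb.rogersL hbt)).add
      (hc.rogersL hcy))).congr_deriv ?_
  rw [integrand_pentagon ht hy]
  ring

theorem pentagonDefect_eq_zero {x y : ℝ} (hx : x ∈ Icc 0 1) (hy : y ∈ Ioo 0 1) :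
    pentagonDefect y x = 0 := by
  rcases hx.1.eq_or_lt with rfl | hx0
  · exact pentagonDefect_zero y
  obtain ⟨c, -, hslope⟩ := exists_hasDerivAt_eq_slope (pentagonDefect y) (fun _ => 0) hx0
    ((continuousOn_pentagonDefect hy.1.le hy.2).mono (Icc_subset_Icc_right hx.2))
    fun t ht => hasDerivAt_pentagonDefect hy ⟨ht.1, ht.2.trans_le hx.2⟩
  rw [pentagonDefect_zero, sub_zero, sub_zero, eq_comm, div_eq_zero_iff] at hslope
  exact hslope.resolve_right hx0.ne'

end RogersL

/-- Pentagon relation for the Rogers dilogarithm. -/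
theorem rogersL_pentagon (x y : ℝ) (hx0 : 0 ≤ x) (hx1 : x ≤ 1) (hy0 : 0 ≤ y) (hy1 : y ≤ 1)
    (hxy : x * y < 1) :
    rogersL x + rogersL y =
      rogersL (x * (1 - y) / (1 - x * y)) + rogersL (x * y) +
        rogersL (y * (1 - x) / (1 - x * y)) := by
  rcases hy0.eq_or_lt with rfl | hy0
  · simp
  rcases hy1.eq_or_lt with rfl | hy1
  · have h1x : 1 - x ≠ 0 := (sub_pos.mpr (by simpa using hxy)).ne'
    simp [h1x]
  exact sub_eq_zero.mp (RogersL.pentagonDefect_eq_zero ⟨hx0, hx1⟩ ⟨hy0, hy1⟩)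
end

section
/- Second relation between the Rogers and Euler dilogarithms: for all real x > 0, −L(x/(1+x)) = Li₂(−x) + (1/2)·log(x)·log(1+x). -/
/-!
Both sides vanish at `x = 0` and have the same derivative on `(0, ∞)`. Writing `u = x / (1 + x)`,
one has `1 - u = 1 / (1 + x)` and `log u = log x - log (1 + x)`, so the chain rule turns
`d/dx (-L u)` into elementary terms in `log x` and `log (1 + x)` that cancel against the derivatives
of `Li₂ (-x)` and `½ log x log (1 + x)`. Continuity at `0` comes from the local integrability of the
two integrands and from `|log x log (1 + x)| ≤ |x log x|`.
-/

open Real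

/-- The Euler dilogarithm, defined for `x ≤ 1` by `Li₂(x) = -∫₀ˣ log(1-y)/y dy`. -/
noncomputable def Li2 (x : ℝ) : ℝ :=
  -∫ y in (0:ℝ)..x, Real.log (1 - y) / y

open MeasureTheory Set Filter Topology intervalIntegral

/-- `log (1 - y)` lies between `-y / (1 - y)` and `-y`. -/
lemma abs_log_one_sub_div_self_le {y : ℝ} (hy : y < 1) :
    |log (1 - y) / y| ≤ max 1 (1 - y)⁻¹ := by
  have h1y : 0 < 1 - y := by linarith
  have upper : log (1 - y) ≤ -y := by linarith [log_le_sub_one_of_pos h1y]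
  have lower : -y * (1 - y)⁻¹ ≤ log (1 - y) := by
    have := one_sub_inv_le_log_of_pos h1y
    have e : 1 - (1 - y)⁻¹ = -y * (1 - y)⁻¹ := by field_simp; ring
    linarith
  rcases lt_trichotomy y 0 with hneg | rfl | hpos
  · have hinv : (1 - y)⁻¹ ≤ 1 := inv_le_one_of_one_le₀ (by linarith)
    rw [abs_le, le_div_iff_of_neg hneg, div_le_iff_of_neg hneg]
    constructor <;> nlinarith [le_max_left 1 (1 - y)⁻¹, inv_pos.2 h1y]
  · simp
  · rw [abs_le, le_div_iff₀ hpos, div_le_iff₀ hpos]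
    constructor <;> nlinarith [le_max_left 1 (1 - y)⁻¹, le_max_right 1 (1 - y)⁻¹]

lemma intervalIntegrable_log_one_sub_div_self {b : ℝ} (hb : b < 1) :
    IntervalIntegrable (fun y => log (1 - y) / y) volume 0 b := by
  refine (intervalIntegrable_const (c := max 1 (1 - b)⁻¹)).mono_fun'
    (by fun_prop : Measurable fun y : ℝ => log (1 - y) / y).aestronglyMeasurable ?_
  rw [EventuallyLE, ae_restrict_iff' measurableSet_uIoc]
  refine ae_of_all _ fun y hy => ?_
  have hyb : y ≤ max 0 b := by
    rcases le_total 0 b with h | h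
    · rw [uIoc_of_le h] at hy; exact hy.2.trans (le_max_right _ _)
    · rw [uIoc_of_ge h] at hy; exact hy.2.trans (le_max_left _ _)
  refine (abs_log_one_sub_div_self_le (hyb.trans_lt (max_lt one_pos hb))).trans
    (max_le (le_max_left _ _) ?_)
  rcases le_max_iff.1 hyb with h | h
  · exact (inv_le_one_of_one_le₀ (by linarith)).trans (le_max_left _ _)
  · exact (inv_anti₀ (by linarith) (by linarith)).trans (le_max_right _ _)

lemma intervalIntegrable_log_div_one_sub {a b : ℝ} (ha : a < 1) (hb : b < 1) :
    IntervalIntegrable (fun y => log y / (1 - y)) volume a b := by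
  simp only [div_eq_mul_inv]
  refine intervalIntegrable_log'.mul_continuousOn
    (ContinuousOn.inv₀ (f := fun y => 1 - y) (by fun_prop) fun y hy => ?_)
  exact sub_ne_zero.2 (hy.2.trans_lt (max_lt ha hb)).ne'

lemma continuousAt_primitive_of_forall_intervalIntegrable {f : ℝ → ℝ} {c y : ℝ}
    (hf : ∀ b < c, IntervalIntegrable f volume 0 b) (hy : y < c) :
    ContinuousAt (fun x => ∫ t in (0:ℝ)..x, f t) y := by
  have hmid : (y + c) / 2 < c := by linarith
  have hmax : IntervalIntegrable f volume 0 (max 0 ((y + c) / 2)) := by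
    rcases max_choice 0 ((y + c) / 2) with h | h <;> rw [h]
    exact hf _ hmid
  have hmin : IntervalIntegrable f volume 0 (min 0 (y - 1)) := by
    rcases min_choice 0 (y - 1) with h | h <;> rw [h]
    exact hf _ (by linarith)
  exact (continuousWithinAt_primitive Real.volume_singleton (hmin.symm.trans hmax)).continuousAt
    (Icc_mem_nhds (by linarith) (by linarith))

lemma continuousAt_Li2 {y : ℝ} (hy : y < 1) : ContinuousAt Li2 y :=
  (continuousAt_primitive_of_forall_intervalIntegrable
    (fun _ => intervalIntegrable_log_one_sub_div_self) hy).neg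

lemma continuousAt_rogersL {y : ℝ} (hy : y < 1) : ContinuousAt rogersL y :=
  (continuousAt_primitive_of_forall_intervalIntegrable (fun _ hb =>
    (intervalIntegrable_log_one_sub_div_self hb).add
      (intervalIntegrable_log_div_one_sub one_pos hb)) hy).const_mul _

lemma hasDerivAt_Li2 {y : ℝ} (hy0 : y ≠ 0) (hy1 : y < 1) :
    HasDerivAt Li2 (-(log (1 - y) / y)) y := by
  have hcont : ContinuousAt (fun t => log (1 - t) / t) y :=
    ((continuousAt_log (by linarith)).comp (by fun_prop)).div continuousAt_id hy0
  have hmeas : Measurable fun t : ℝ => log (1 - t) / t := by fun_prop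
  exact (integral_hasDerivAt_right (intervalIntegrable_log_one_sub_div_self hy1)
    hmeas.aestronglyMeasurable.stronglyMeasurableAtFilter hcont).neg

lemma hasDerivAt_rogersL {y : ℝ} (hy0 : y ≠ 0) (hy1 : y < 1) :
    HasDerivAt rogersL (-(1 / 2) * (log (1 - y) / y + log y / (1 - y))) y := by
  have hcont : ContinuousAt (fun t => log (1 - t) / t + log t / (1 - t)) y :=
    (((continuousAt_log (by linarith)).comp (by fun_prop)).div continuousAt_id hy0).add
      ((continuousAt_log hy0).div (by fun_prop) (by linarith))
  have hmeas : Measurable fun t : ℝ => log (1 - t) / t + log t / (1 - t) := by fun_prop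
  exact (integral_hasDerivAt_right ((intervalIntegrable_log_one_sub_div_self hy1).add
      (intervalIntegrable_log_div_one_sub one_pos hy1))
    hmeas.aestronglyMeasurable.stronglyMeasurableAtFilter hcont).const_mul _

lemma tendsto_log_mul_log_one_add_nhdsGE_zero :
    Tendsto (fun s => log s * log (1 + s)) (𝓝[≥] 0) (𝓝 0) := by
  have hmul_log : Tendsto (fun s => |s * log s|) (𝓝[≥] 0) (𝓝 0) := by
    simpa using (continuous_mul_log.abs.tendsto 0).mono_left nhdsWithin_le_nhds
  refine squeeze_zero_norm' ?_ hmul_log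
  filter_upwards [self_mem_nhdsWithin] with s (hs : 0 ≤ s)
  have hlog_nonneg : 0 ≤ log (1 + s) := log_nonneg (by linarith)
  have hlog_le : log (1 + s) ≤ s := by linarith [log_le_sub_one_of_pos (x := 1 + s) (by linarith)]
  rw [norm_mul, norm_eq_abs, norm_eq_abs, abs_mul, abs_of_nonneg hlog_nonneg, abs_of_nonneg hs,
    mul_comm s]
  exact mul_le_mul_of_nonneg_left hlog_le (abs_nonneg _)

noncomputable def rogersLLi2Defect (s : ℝ) : ℝ :=
  -rogersL (s / (1 + s)) - Li2 (-s) - 1 / 2 * log s * log (1 + s)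

lemma rogersLLi2Defect_zero : rogersLLi2Defect 0 = 0 := by
  simp [rogersLLi2Defect, rogersL, Li2]

lemma continuousOn_rogersLLi2Defect : ContinuousOn rogersLLi2Defect (Ici 0) := by
  intro s (hs : 0 ≤ s)
  have h1s : 0 < 1 + s := by linarith
  have hR : ContinuousAt (fun s => rogersL (s / (1 + s))) s :=
    ContinuousAt.comp (g := rogersL) (continuousAt_rogersL ((div_lt_one h1s).2 (by linarith)))
      (continuousAt_id.div (by fun_prop) h1s.ne')
  have hL : ContinuousAt (fun s => Li2 (-s)) s :=
    ContinuousAt.comp (g := Li2) (continuousAt_Li2 (by linarith)) continuousAt_neg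
  have hP : ContinuousWithinAt (fun s => 1 / 2 * log s * log (1 + s)) (Ici 0) s := by
    simp_rw [mul_assoc]
    refine continuousWithinAt_const.mul ?_
    rcases hs.eq_or_lt with rfl | hs
    · simpa [ContinuousWithinAt] using tendsto_log_mul_log_one_add_nhdsGE_zero
    · exact ((continuousAt_log hs.ne').mul
        ((continuousAt_log h1s.ne').comp (by fun_prop))).continuousWithinAt
  exact (hR.continuousWithinAt.neg.sub hL.continuousWithinAt).sub hP

lemma hasDerivAt_rogersLLi2Defect {t : ℝ} (ht : 0 < t) : HasDerivAt rogersLLi2Defect 0 t := by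
  have h1t : 0 < 1 + t := by linarith
  have hu : HasDerivAt (fun s => s / (1 + s)) (1 / (1 + t) ^ 2) t := by
    refine ((hasDerivAt_id' t).div ((hasDerivAt_id' t).const_add 1) h1t.ne').congr_deriv ?_
    ring
  have hR := (hasDerivAt_rogersL (div_pos ht h1t).ne' ((div_lt_one h1t).2 (by linarith))).comp t hu
  have hL := (hasDerivAt_Li2 (neg_ne_zero.2 ht.ne') (by linarith)).comp t (hasDerivAt_neg t)
  have hP := ((hasDerivAt_log ht.ne').const_mul (1 / 2)).mul
    (((hasDerivAt_id' t).const_add 1).log h1t.ne')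
  refine (show HasDerivAt rogersLLi2Defect _ t from (hR.neg.sub hL).sub hP).congr_deriv ?_
  have h1u : 1 - t / (1 + t) = (1 + t)⁻¹ := by field_simp; ring
  rw [h1u, log_div ht.ne' h1t.ne', log_inv]
  rw [sub_neg_eq_add]
  field_simp
  ring

lemma rogersLLi2Defect_eq_zero {x : ℝ} (hx : 0 ≤ x) : rogersLLi2Defect x = 0 := by
  rcases hx.eq_or_lt with rfl | hx
  · exact rogersLLi2Defect_zero
  obtain ⟨_, -, hslope⟩ := exists_hasDerivAt_eq_slope rogersLLi2Defect (fun _ => 0) hx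
    (continuousOn_rogersLLi2Defect.mono Icc_subset_Ici_self)
    (fun t ht => hasDerivAt_rogersLLi2Defect ht.1)
  rw [rogersLLi2Defect_zero, sub_zero, sub_zero, eq_comm, div_eq_zero_iff] at hslope
  exact hslope.resolve_right hx.ne'

/-- Second relation between the Rogers and Euler dilogarithms. -/
theorem neg_rogersL_eq_Li2_add (x : ℝ) (hx : 0 < x) :
    -rogersL (x / (1 + x)) = Li2 (-x) + (1 / 2) * Real.log x * Real.log (1 + x) := by
  have hdefect := rogersLLi2Defect_eq_zero hx.le
  rw [rogersLLi2Defect] at hdefect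
  linarith
end

section
/- Classical dilogarithm identity of type A₂ (signed form): for all real y₁ > 0 and y₂ > 0, L(y₁/(1+y₁)) + L(y₂(1+y₁)/(1+y₂+y₁y₂)) − L(y₁/((1+y₁)(1+y₂))) − L(y₁y₂/(1+y₂+y₁y₂)) − L(y₂/(1+y₂)) = 0. -/
/-!
Fix `y₂ > 0` and regard the left-hand side as a function of `t = y₁ ≥ 0`. At `t = 0` it is
`L(0) + L(y₂/(1+y₂)) - L(0) - L(0) - L(y₂/(1+y₂)) = 0`, and it is continuous there since the
integrand of `L` is integrable up to every `b < 1`. For `t > 0` its derivative vanishes: by the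
chain rule each term contributes `-(1/2)(log(1-x)/x + log x/(1-x)) x'`, and for each of the four
moving arguments `x` both `x` and `1 - x` are quotients of products of
`t, 1 + t, y₂, 1 + y₂, 1 + y₂ + t y₂`, so after expanding the logarithms the sum is a rational
identity in `t, y₂` with these five logarithms as free symbols.
-/

open Real MeasureTheory Set

noncomputable def rogersIntegrand (y : ℝ) : ℝ := log (1 - y) / y + log y / (1 - y)

theorem log_one_sub_div_eq_dslope {y : ℝ} (hy : y ≠ 0) :
    log (1 - y) / y = dslope (fun y => log (1 - y)) 0 y := by
  rw [dslope_of_ne _ hy, slope_def_field]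
  simp

theorem continuousOn_dslope_log_one_sub :
    ContinuousOn (dslope (fun y => log (1 - y)) 0) (Iio 1) := by
  rw [continuousOn_dslope (Iio_mem_nhds one_pos)]
  refine ⟨fun y hy => ?_, by fun_prop (disch := norm_num)⟩
  exact (continuousAt_log (sub_ne_zero.mpr (ne_of_gt hy))).comp_continuousWithinAt (by fun_prop)

/-- The first summand is a difference quotient of `log (1 - y)` at `0`, continuous once its value
at `0` is filled in; the second is `log` (that is, `log |y|` for `y < 0`) times a continuous
function. -/
theorem intervalIntegrable_rogersIntegrand {a b : ℝ} (ha : a < 1) (hb : b < 1) :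
    IntervalIntegrable rogersIntegrand volume a b := by
  have hsub : uIcc a b ⊆ Iio 1 := fun y hy =>
    (le_max_iff.mp hy.2).elim (·.trans_lt ha) (·.trans_lt hb)
  refine IntervalIntegrable.add ?_ ?_
  · refine (continuousOn_dslope_log_one_sub.mono hsub).intervalIntegrable.congr_ae ?_
    filter_upwards [ae_restrict_of_ae ((countable_singleton (0:ℝ)).ae_notMem volume)] with y hy
    exact (log_one_sub_div_eq_dslope hy).symm
  · simpa only [div_eq_mul_inv] using
      intervalIntegral.intervalIntegrable_log'.mul_continuousOn (g := fun y => (1 - y)⁻¹)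
        (ContinuousOn.inv₀ (by fun_prop) fun y hy => sub_ne_zero.mpr (hsub hy).ne')

theorem continuousAt_rogersL_s4 {x : ℝ} (hx : x < 1) : ContinuousAt rogersL x := by
  have hint : IntervalIntegrable rogersIntegrand volume (min 0 (x - 1)) (max 0 ((x + 1) / 2)) :=
    intervalIntegrable_rogersIntegrand (by simp) (max_lt one_pos (by linarith))
  exact ((intervalIntegral.continuousWithinAt_primitive (measure_singleton x) hint).continuousAt
    (Icc_mem_nhds (by linarith) (by linarith))).const_mul _

theorem hasDerivAt_rogersL_s4 {x : ℝ} (hx0 : 0 < x) (hx1 : x < 1) :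
    HasDerivAt rogersL (-(1 / 2) * rogersIntegrand x) x := by
  have hcont : ContinuousOn rogersIntegrand (Ioo 0 1) := fun y hy => by
    have hy1 : 1 - y ≠ 0 := sub_ne_zero.mpr hy.2.ne'
    have hy0 : y ≠ 0 := hy.1.ne'
    unfold rogersIntegrand
    exact ContinuousAt.continuousWithinAt (by fun_prop (disch := assumption))
  exact (intervalIntegral.integral_hasDerivAt_right
    (intervalIntegrable_rogersIntegrand (by norm_num) hx1)
    (hcont.stronglyMeasurableAtFilter isOpen_Ioo x ⟨hx0, hx1⟩)
    ((hcont x ⟨hx0, hx1⟩).continuousAt (Ioo_mem_nhds hx0 hx1))).const_mul _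

theorem rogersL_zero : rogersL 0 = 0 := by
  simp [rogersL]

noncomputable def rogersA2Sum (y₁ y₂ : ℝ) : ℝ :=
  rogersL (y₁ / (1 + y₁)) + rogersL (y₂ * (1 + y₁) / (1 + y₂ + y₁ * y₂))
    - rogersL (y₁ / ((1 + y₁) * (1 + y₂))) - rogersL (y₁ * y₂ / (1 + y₂ + y₁ * y₂))
    - rogersL (y₂ / (1 + y₂))

theorem rogersA2Sum_zero_left (y : ℝ) : rogersA2Sum 0 y = 0 := by
  simp [rogersA2Sum, rogersL_zero]

theorem continuousAt_rogersA2Sum_zero {y : ℝ} (hy : 0 < y) :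
    ContinuousAt (fun t => rogersA2Sum t y) 0 := by
  have hy1 : y / (1 + y) < 1 := (div_lt_one (by positivity)).mpr (by linarith)
  have h1y : 1 + y ≠ 0 := by positivity
  unfold rogersA2Sum
  refine ((((ContinuousAt.comp_of_eq (continuousAt_rogersL_s4 one_pos) ?_ ?_).add
    (ContinuousAt.comp_of_eq (continuousAt_rogersL_s4 hy1) ?_ ?_)).sub
    (ContinuousAt.comp_of_eq (continuousAt_rogersL_s4 one_pos) ?_ ?_)).sub
    (ContinuousAt.comp_of_eq (continuousAt_rogersL_s4 one_pos) ?_ ?_)).sub continuousAt_const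
  all_goals first | fun_prop (disch := simp [h1y]) | simp

theorem rogersIntegrand_A2_identity {t y : ℝ} (ht : 0 < t) (hy : 0 < y) :
    rogersIntegrand (t / (1 + t)) * (1 / (1 + t) ^ 2)
      + rogersIntegrand (y * (1 + t) / (1 + y + t * y)) * (y / (1 + y + t * y) ^ 2)
      - rogersIntegrand (t / ((1 + t) * (1 + y))) * (1 / ((1 + t) ^ 2 * (1 + y)))
      - rogersIntegrand (t * y / (1 + y + t * y)) * (y * (1 + y) / (1 + y + t * y) ^ 2) = 0 := by
  have h1t : 1 + t ≠ 0 := by positivity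
  have h1y : 1 + y ≠ 0 := by positivity
  have hQ : 1 + y + t * y ≠ 0 := by positivity
  have e1 : 1 - t / (1 + t) = 1 / (1 + t) := by field_simp; ring
  have e2 : 1 - y * (1 + t) / (1 + y + t * y) = 1 / (1 + y + t * y) := by field_simp; ring
  have e3 : 1 - t / ((1 + t) * (1 + y)) = (1 + y + t * y) / ((1 + t) * (1 + y)) := by
    field_simp; ring
  have e4 : 1 - t * y / (1 + y + t * y) = (1 + y) / (1 + y + t * y) := by field_simp; ring
  simp only [rogersIntegrand, e1, e2, e3, e4]
  simp only [log_div, log_mul, log_one, ht.ne', hy.ne', h1t, h1y, hQ, one_ne_zero, ne_eq,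
    mul_eq_zero, or_self, not_false_eq_true]
  field_simp
  ring

theorem hasDerivAt_rogersA2Sum {t y : ℝ} (ht : 0 < t) (hy : 0 < y) :
    HasDerivAt (fun t => rogersA2Sum t y) 0 t := by
  have h1t : 0 < 1 + t := by positivity
  have h1y : 0 < 1 + y := by positivity
  have hQ : 0 < 1 + y + t * y := by positivity
  have hx₁ : HasDerivAt (fun t => t / (1 + t)) (1 / (1 + t) ^ 2) t := by
    refine ((hasDerivAt_id' t).fun_div ((hasDerivAt_id' t).const_add 1) h1t.ne').congr_deriv ?_
    field_simp; ring
  have hx₂ : HasDerivAt (fun t => y * (1 + t) / (1 + y + t * y)) (y / (1 + y + t * y) ^ 2) t := by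
    refine ((((hasDerivAt_id' t).const_add 1).const_mul y).fun_div
      (((hasDerivAt_id' t).mul_const y).const_add (1 + y)) hQ.ne').congr_deriv ?_
    field_simp; ring
  have hx₃ : HasDerivAt (fun t => t / ((1 + t) * (1 + y))) (1 / ((1 + t) ^ 2 * (1 + y))) t := by
    refine ((hasDerivAt_id' t).fun_div (((hasDerivAt_id' t).const_add 1).mul_const (1 + y))
      (by positivity)).congr_deriv ?_
    field_simp; ring
  have hx₄ : HasDerivAt (fun t => t * y / (1 + y + t * y)) (y * (1 + y) / (1 + y + t * y) ^ 2) t := by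
    refine (((hasDerivAt_id' t).mul_const y).fun_div
      (((hasDerivAt_id' t).mul_const y).const_add (1 + y)) hQ.ne').congr_deriv ?_
    field_simp; ring
  have L₁ := (hasDerivAt_rogersL_s4 (by positivity) ((div_lt_one h1t).mpr (by linarith))).comp t hx₁
  have L₂ := (hasDerivAt_rogersL_s4 (by positivity) ((div_lt_one hQ).mpr (by linarith))).comp t hx₂
  have L₃ := (hasDerivAt_rogersL_s4 (by positivity) ((div_lt_one (mul_pos h1t h1y)).mpr
    (by nlinarith))).comp t hx₃
  have L₄ := (hasDerivAt_rogersL_s4 (by positivity) ((div_lt_one hQ).mpr (by linarith))).comp t hx₄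
  exact ((((L₁.add L₂).sub L₃).sub L₄).sub_const (rogersL (y / (1 + y)))).congr_deriv
    (by linear_combination (-1 / 2 : ℝ) * rogersIntegrand_A2_identity ht hy)

/-- Classical dilogarithm identity of type `A₂`, signed form. -/
theorem dilogarithm_identity_A2_signed (y₁ y₂ : ℝ) (h1 : 0 < y₁) (h2 : 0 < y₂) :
    rogersL (y₁ / (1 + y₁)) + rogersL (y₂ * (1 + y₁) / (1 + y₂ + y₁ * y₂))
      - rogersL (y₁ / ((1 + y₁) * (1 + y₂))) - rogersL (y₁ * y₂ / (1 + y₂ + y₁ * y₂))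
      - rogersL (y₂ / (1 + y₂)) = 0 := by
  have hcont : ContinuousOn (fun t => rogersA2Sum t y₂) (Icc 0 y₁) := by
    rintro t ⟨ht, -⟩
    rcases ht.eq_or_lt with rfl | ht
    · exact (continuousAt_rogersA2Sum_zero h2).continuousWithinAt
    · exact (hasDerivAt_rogersA2Sum ht h2).continuousAt.continuousWithinAt
  obtain ⟨c, -, hc⟩ := exists_hasDerivAt_eq_slope (fun t => rogersA2Sum t y₂) (fun _ => 0) h1
    hcont fun t ht => hasDerivAt_rogersA2Sum ht.1 h2
  rw [rogersA2Sum_zero_left, sub_zero, sub_zero, eq_div_iff h1.ne', zero_mul] at hc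
  exact hc.symm
end

section
/- Semiclassical asymptotics of the quantum dilogarithm: for every real x > 0, the limit as q → 1⁻ (q real, 0 < q < 1) of (1 − q) · Σ_{k=0}^∞ log(1 + q^{2k+1} x) exists and equals (1/2)·∫₀ˣ log(1+t)/t dt, i.e. equals −Li₂(−x)/2. -/
/-!
With `r = q²`, the points `x r^k` cut `(0, x]` into intervals on each of which
`∫ dt / t = -log r`. As `log (1 + t)` increases, the integral of `log (1 + t) / t` over the `k`-th
interval lies between `-log r · log (1 + x r^(k+1))` and `-log r · log (1 + x r^k)`. Summing over
`k`, the integral is bracketed by `-log r` times two series that differ by `log (1 + x)` and that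
also bracket `Σ log (1 + q^(2k+1) x)`. So `-2 log q` times this series tends to the integral, and
`(1 - q) / (-2 log q) → 1/2`.
-/

open Real Filter Topology Set intervalIntegral

lemma log_one_add_div_self_mem_Icc {t : ℝ} (ht : 0 ≤ t) : log (1 + t) / t ∈ Icc 0 1 := by
  rcases ht.eq_or_lt with rfl | ht
  · simp
  · exact ⟨div_nonneg (log_nonneg (by linarith)) ht.le,
      (div_le_one ht).2 (by linarith [log_le_sub_one_of_pos (by linarith : 0 < 1 + t)])⟩

lemma intervalIntegrable_log_one_add_div_self {a b : ℝ} (ha : 0 ≤ a) (hb : 0 ≤ b) :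
    IntervalIntegrable (fun t => log (1 + t) / t) MeasureTheory.volume a b := by
  refine (intervalIntegrable_const (c := (1 : ℝ))).mono_fun' ?_ ?_
  · exact ((measurable_log.comp (measurable_const.add measurable_id)).div
      measurable_id).aestronglyMeasurable
  · filter_upwards [MeasureTheory.ae_restrict_mem measurableSet_uIoc] with t ht
    have hg := log_one_add_div_self_mem_Icc ((le_min ha hb).trans_lt ht.1).le
    rw [norm_of_nonneg hg.1]
    exact hg.2

lemma integral_log_one_add_div_self_mem_Icc {a : ℝ} (ha : 0 ≤ a) :
    ∫ t in (0 : ℝ)..a, log (1 + t) / t ∈ Icc 0 a := by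
  refine ⟨integral_nonneg ha fun t ht => (log_one_add_div_self_mem_Icc ht.1).1, ?_⟩
  calc ∫ t in (0 : ℝ)..a, log (1 + t) / t ≤ ∫ _ in (0 : ℝ)..a, (1 : ℝ) :=
        integral_mono_on ha (intervalIntegrable_log_one_add_div_self le_rfl ha)
          intervalIntegrable_const fun t ht => (log_one_add_div_self_mem_Icc ht.1).2
    _ = a := by simp

lemma integral_log_one_add_div_self_eq_neg_Li2 (x : ℝ) :
    ∫ t in (0 : ℝ)..x, log (1 + t) / t = -Li2 (-x) := by
  have h := integral_comp_neg (a := 0) (b := x) fun y => log (1 - y) / y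
  simp only [sub_neg_eq_add, div_neg, integral_neg, neg_zero] at h
  rw [integral_symm 0 (-x)] at h
  rw [Li2]
  linarith

lemma MonotoneOn.integral_div_self_mem_Icc {f : ℝ → ℝ} {a b : ℝ} (ha : 0 < a)
    (hab : a ≤ b) (hf : MonotoneOn f (Icc a b)) :
    ∫ t in a..b, f t / t ∈ Icc (f a * log (b / a)) (f b * log (b / a)) := by
  have hpos : ∀ t ∈ uIcc a b, 0 < t := fun t ht => ha.trans_le (uIcc_of_le hab ▸ ht).1
  have hint : IntervalIntegrable (fun t => f t / t) MeasureTheory.volume a b := by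
    simpa only [div_eq_mul_inv] using (uIcc_of_le hab ▸ hf).intervalIntegrable.mul_continuousOn
      (continuousOn_inv₀.mono fun t ht => (hpos t ht).ne')
  have hconst (c : ℝ) : ∫ t in a..b, c / t = c * log (b / a) := by
    simp only [div_eq_mul_one_div c, integral_const_mul,
      integral_one_div fun h => (hpos 0 h).false]
  have hconstInt (c : ℝ) : IntervalIntegrable (fun t => c / t) MeasureTheory.volume a b :=
    (continuousOn_const.div continuousOn_id fun t ht => (hpos t ht).ne').intervalIntegrable
  rw [← hconst, ← hconst]
  exact ⟨integral_mono_on hab (hconstInt _) hint fun t ht =>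
      div_le_div_of_nonneg_right (hf (left_mem_Icc.2 hab) ht ht.1) (ha.trans_le ht.1).le,
    integral_mono_on hab hint (hconstInt _) fun t ht =>
      div_le_div_of_nonneg_right (hf ht (right_mem_Icc.2 hab) ht.2) (ha.trans_le ht.1).le⟩

lemma hasSum_integral_log_one_add_div_self_geometric {r x : ℝ} (hr0 : 0 ≤ r) (hr1 : r < 1)
    (hx : 0 ≤ x) :
    HasSum (fun k : ℕ => ∫ t in x * r ^ (k + 1)..x * r ^ k, log (1 + t) / t)
      (∫ t in (0 : ℝ)..x, log (1 + t) / t) := by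
  set a : ℕ → ℝ := fun k => x * r ^ k with ha_def
  have ha (k : ℕ) : 0 ≤ a k := by positivity
  have hanti (k : ℕ) : a (k + 1) ≤ a k :=
    mul_le_mul_of_nonneg_left (pow_le_pow_of_le_one hr0 hr1.le k.le_succ) hx
  have hpartial (n : ℕ) : ∑ k ∈ Finset.range n, ∫ t in a (k + 1)..a k, log (1 + t) / t
      = (∫ t in (0 : ℝ)..x, log (1 + t) / t) - ∫ t in (0 : ℝ)..a n, log (1 + t) / t := by
    rw [Finset.sum_congr rfl fun k _ => integral_symm (a k) (a (k + 1)), Finset.sum_neg_distrib,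
      sum_integral_adjacent_intervals fun k _ =>
        intervalIntegrable_log_one_add_div_self (ha k) (ha (k + 1)),
      integral_interval_sub_left (intervalIntegrable_log_one_add_div_self le_rfl hx)
        (intervalIntegrable_log_one_add_div_self le_rfl (ha n)), integral_symm x]
    simp [ha_def]
  have hinit : Tendsto (fun n => ∫ t in (0 : ℝ)..a n, log (1 + t) / t) atTop (𝓝 0) := by
    have ha0 : Tendsto a atTop (𝓝 0) := by
      simpa using (tendsto_pow_atTop_nhds_zero_of_lt_one hr0 hr1).const_mul x
    exact squeeze_zero (fun n => (integral_log_one_add_div_self_mem_Icc (ha n)).1)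
      (fun n => (integral_log_one_add_div_self_mem_Icc (ha n)).2) ha0
  rw [hasSum_iff_tendsto_nat_of_nonneg fun k => integral_nonneg (hanti k) fun t ht =>
    (log_one_add_div_self_mem_Icc ((ha _).trans ht.1)).1]
  simpa [hpartial] using tendsto_const_nhds.sub hinit

/-- `logQPochhammer r c = log (-c; r)_∞`. -/
noncomputable def logQPochhammer (r c : ℝ) : ℝ := ∑' k : ℕ, log (1 + c * r ^ k)

section logQPochhammer

variable {r : ℝ} (hr0 : 0 ≤ r) (hr1 : r < 1)
include hr0 hr1

lemma summable_log_one_add_mul_pow (c : ℝ) : Summable fun k : ℕ => log (1 + c * r ^ k) :=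
  Real.summable_log_one_add_of_summable ((summable_geometric_of_lt_one hr0 hr1).mul_left c)

lemma logQPochhammer_eq_log_one_add_add (c : ℝ) :
    logQPochhammer r c = log (1 + c) + logQPochhammer r (r * c) := by
  rw [logQPochhammer, (summable_log_one_add_mul_pow hr0 hr1 c).tsum_eq_zero_add, logQPochhammer]
  simp [pow_succ, mul_comm, mul_left_comm, mul_assoc]

lemma logQPochhammer_mono {c c' : ℝ} (hc : 0 ≤ c) (hcc' : c ≤ c') :
    logQPochhammer r c ≤ logQPochhammer r c' :=
  (summable_log_one_add_mul_pow hr0 hr1 c).tsum_le_tsum (fun k => by gcongr)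
    (summable_log_one_add_mul_pow hr0 hr1 c')

end logQPochhammer

lemma neg_log_mul_logQPochhammer_le_integral_le {r x : ℝ} (hr0 : 0 < r) (hr1 : r < 1)
    (hx : 0 < x) :
    -log r * logQPochhammer r (r * x) ≤ ∫ t in (0 : ℝ)..x, log (1 + t) / t ∧
      ∫ t in (0 : ℝ)..x, log (1 + t) / t ≤ -log r * logQPochhammer r x := by
  have hmono : MonotoneOn (fun t : ℝ => log (1 + t)) (Ici 0) := fun s hs t _ hst =>
    log_le_log (by linarith [mem_Ici.1 hs]) (by linarith)
  have hpos (k : ℕ) : 0 < x * r ^ (k + 1) := by positivity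
  have hanti (k : ℕ) : x * r ^ (k + 1) ≤ x * r ^ k :=
    mul_le_mul_of_nonneg_left (pow_le_pow_of_le_one hr0.le hr1.le k.le_succ) hx.le
  have hterm (k : ℕ) := (hmono.mono fun t ht => (hpos k).le.trans ht.1).integral_div_self_mem_Icc
    (hpos k) (hanti k)
  have hratio (k : ℕ) : log (x * r ^ k / (x * r ^ (k + 1))) = -log r := by
    rw [← log_inv, pow_succ]; congr 1; field_simp
  have hI := hasSum_integral_log_one_add_div_self_geometric hr0.le hr1 hx.le
  constructor
  · refine hasSum_le (fun k => ?_)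
      ((summable_log_one_add_mul_pow hr0.le hr1 (r * x)).hasSum.mul_left (-log r)) hI
    convert (hterm k).1 using 1
    rw [hratio, pow_succ]; ring_nf
  · refine hasSum_le (fun k => ?_) hI
      ((summable_log_one_add_mul_pow hr0.le hr1 x).hasSum.mul_left (-log r))
    convert (hterm k).2 using 1
    rw [hratio, mul_comm]

lemma abs_neg_log_mul_logQPochhammer_sub_integral_le {r x c : ℝ} (hr0 : 0 < r) (hr1 : r < 1)
    (hx : 0 < x) (hrc : r * x ≤ c) (hcx : c ≤ x) :
    |-log r * logQPochhammer r c - ∫ t in (0 : ℝ)..x, log (1 + t) / t| ≤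
      -log r * log (1 + x) := by
  obtain ⟨hlower, hupper⟩ := neg_log_mul_logQPochhammer_le_integral_le hr0 hr1 hx
  have hL : 0 ≤ -log r := neg_nonneg.2 (log_nonpos hr0.le hr1.le)
  have hshift := congrArg (-log r * ·) (logQPochhammer_eq_log_one_add_add hr0.le hr1 x)
  have hc := mul_le_mul_of_nonneg_left
    (logQPochhammer_mono hr0.le hr1 (by positivity) hrc) hL
  have hc' := mul_le_mul_of_nonneg_left
    (logQPochhammer_mono hr0.le hr1 ((by positivity : 0 ≤ r * x).trans hrc) hcx) hL
  simp only [mul_add] at hshift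
  rw [abs_le]
  constructor <;> linarith

lemma tendsto_log_div_sub_one : Tendsto (fun q => log q / (q - 1)) (𝓝[≠] 1) (𝓝 1) := by
  simpa [slope_fun_def, div_eq_inv_mul] using
    hasDerivAt_iff_tendsto_slope.1 (hasDerivAt_log one_ne_zero)

lemma tendsto_one_sub_div_neg_log_sq :
    Tendsto (fun q => (1 - q) / -log (q ^ 2)) (𝓝[≠] 1) (𝓝 (1 / 2)) := by
  convert (tendsto_log_div_sub_one.const_mul 2).inv₀ (by norm_num) using 2 with q
  · rw [log_pow, mul_inv, inv_div]; ring
  · norm_num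

lemma tendsto_neg_log_sq_mul_logQPochhammer {x : ℝ} (hx : 0 < x) :
    Tendsto (fun q : ℝ => -log (q ^ 2) * logQPochhammer (q ^ 2) (q * x))
      (𝓝[Ioo 0 1] 1) (𝓝 (∫ t in (0 : ℝ)..x, log (1 + t) / t)) := by
  have herror : Tendsto (fun q : ℝ => -log (q ^ 2) * log (1 + x)) (𝓝[Ioo 0 1] 1) (𝓝 0) := by
    have : ContinuousAt (fun q : ℝ => -log (q ^ 2) * log (1 + x)) 1 := by
      fun_prop (disch := norm_num)
    simpa using this.tendsto.mono_left nhdsWithin_le_nhds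
  refine tendsto_sub_nhds_zero_iff.1 (squeeze_zero_norm' ?_ herror)
  filter_upwards [self_mem_nhdsWithin] with q ⟨hq0, hq1⟩
  rw [Real.norm_eq_abs]
  exact abs_neg_log_mul_logQPochhammer_sub_integral_le (r := q ^ 2) (c := q * x) (by positivity)
    (by nlinarith) hx (mul_le_mul_of_nonneg_right (by nlinarith) hx.le)
    (mul_le_of_le_one_left hx.le hq1.le)

/-- Semiclassical asymptotics of the quantum dilogarithm: as `q → 1⁻`,
`(1 - q) Σ_{k≥0} log(1 + q^{2k+1} x) → (1/2) ∫₀ˣ log(1+t)/t dt = -Li₂(-x)/2`. -/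
theorem quantum_dilog_semiclassical (x : ℝ) (hx : 0 < x) :
    Filter.Tendsto (fun q : ℝ => (1 - q) * ∑' k : ℕ, Real.log (1 + q ^ (2 * k + 1) * x))
      (nhdsWithin 1 (Set.Ioo (0:ℝ) 1))
      (nhds ((1 / 2) * ∫ t in (0:ℝ)..x, Real.log (1 + t) / t)) ∧
    (1 / 2) * (∫ t in (0:ℝ)..x, Real.log (1 + t) / t) = -Li2 (-x) / 2 := by
  have hratio := tendsto_one_sub_div_neg_log_sq.mono_left
    (nhdsWithin_mono 1 fun q (hq : q ∈ Ioo (0 : ℝ) 1) => hq.2.ne)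
  refine ⟨(hratio.mul (tendsto_neg_log_sq_mul_logQPochhammer hx)).congr' ?_,
    by rw [integral_log_one_add_div_self_eq_neg_Li2]; ring⟩
  filter_upwards [self_mem_nhdsWithin] with q ⟨hq0, hq1⟩
  have hlog : log (q ^ 2) ≠ 0 := (log_neg (by positivity) (by nlinarith)).ne
  have hseries : ∑' k : ℕ, log (1 + q ^ (2 * k + 1) * x) = logQPochhammer (q ^ 2) (q * x) :=
    tsum_congr fun k => by ring_nf
  rw [hseries]
  field_simp
end

section
/- Pentagon identity for the quantum dilogarithm in a Banach algebra: let 𝒜 be a complex unital Banach algebra, q ∈ ℂ with 0 < |q| < 1, and U, V ∈ 𝒜 with U·V = q²·V·U, ‖U‖ < 1 and ‖V‖ < 1. Then Ψ_q(U)·Ψ_q(V) = Ψ_q(V)·Ψ_q(q^{−1}·U·V)·Ψ_q(U). (Note ‖q^{−1}UV‖ ≤ |q|^{−1}‖U‖‖V‖ < 1/|q|, so all three series converge.) -/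
/-!
With `c n = (-q)ⁿ / ∏_{k=1}^n (1 - q^{2k})`, the relation `UV = q²VU` gives
`Uᵐ Vⁿ = q^{2mn} Vⁿ Uᵐ` and `(q⁻¹UV)ᵏ = (qVU)ᵏ = q^{k²} Vᵏ Uᵏ`. Multiplying out the
absolutely convergent series and grouping the right-hand side by the monomials `Vᵃ Uᵇ`,
the pentagon identity becomes the q-Chu–Vandermonde identity
`∑_{k ≤ min a b} c (a - k) * c k * c (b - k) * q^{k²} = q^{2ab} * c a * c b`,
which follows by induction on the smaller index from `(1 - q^{2(n+1)}) c (n + 1) = -q c n`.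
-/

/-- The quantum dilogarithm `Ψ_q(W) = Σₙ (-q)ⁿ Wⁿ / ∏_{k=1}^n (1 - q^{2k})` of an
element `W` of a complex unital Banach algebra, for `0 < |q| < 1` and `‖W‖ < 1/|q|`. -/
noncomputable def quantumPsiB {A : Type*} [NormedRing A] [NormedAlgebra ℂ A]
    (q : ℂ) (W : A) : A :=
  ∑' n : ℕ, ((-q) ^ n / ∏ k ∈ Finset.range n, (1 - q ^ (2 * (k + 1)))) • W ^ n

open Finset Filter Topology

noncomputable def qDilogCoeff (q : ℂ) (n : ℕ) : ℂ :=
  (-q) ^ n / ∏ k ∈ range n, (1 - q ^ (2 * (k + 1)))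

theorem quantumPsiB_eq_tsum {A : Type*} [NormedRing A] [NormedAlgebra ℂ A] (q : ℂ) (W : A) :
    quantumPsiB q W = ∑' n, qDilogCoeff q n • W ^ n :=
  rfl

theorem one_sub_pow_ne_zero_of_norm_lt_one {K : Type*} [NormedDivisionRing K] {x : K}
    (hx : ‖x‖ < 1) {n : ℕ} (hn : n ≠ 0) : 1 - x ^ n ≠ 0 := by
  rw [sub_ne_zero, ne_comm]
  refine fun h => (pow_lt_one₀ (norm_nonneg x) hx hn).ne ?_
  rw [← norm_pow, h, norm_one]

section Coefficients

variable {q : ℂ}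

@[simp]
theorem qDilogCoeff_zero : qDilogCoeff q 0 = 1 := by
  simp [qDilogCoeff]

theorem qDilogCoeff_succ (hq : ‖q‖ < 1) (n : ℕ) :
    (1 - q ^ (2 * (n + 1))) * qDilogCoeff q (n + 1) = -q * qDilogCoeff q n := by
  have hprod : ∏ k ∈ range n, (1 - q ^ (2 * (k + 1))) ≠ 0 :=
    prod_ne_zero_iff.2 fun k _ => one_sub_pow_ne_zero_of_norm_lt_one hq (by omega)
  have hfactor := one_sub_pow_ne_zero_of_norm_lt_one hq (n := 2 * (n + 1)) (by omega)
  rw [qDilogCoeff, qDilogCoeff, prod_range_succ, pow_succ]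
  field_simp

theorem qDilogCoeff_pentagon_step (hq : ‖q‖ < 1) (i k j : ℕ) :
    q ^ (2 * k) * ((1 - q ^ (2 * (i + 1))) * qDilogCoeff q (i + 1)) * qDilogCoeff q k *
          qDilogCoeff q (j + 1) * q ^ (k ^ 2) +
        (1 - q ^ (2 * (k + 1))) * qDilogCoeff q i * qDilogCoeff q (k + 1) * qDilogCoeff q j *
          q ^ ((k + 1) ^ 2) =
      -q ^ (2 * (k + j + 1) + 1) *
        (qDilogCoeff q i * qDilogCoeff q k * qDilogCoeff q (j + 1) * q ^ (k ^ 2)) := by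
  linear_combination
    q ^ (2 * k) * qDilogCoeff q k * qDilogCoeff q (j + 1) * q ^ (k ^ 2) * qDilogCoeff_succ hq i +
    qDilogCoeff q i * qDilogCoeff q j * q ^ ((k + 1) ^ 2) * qDilogCoeff_succ hq k -
    q ^ (2 * k + 1) * qDilogCoeff q i * qDilogCoeff q k * q ^ (k ^ 2) * qDilogCoeff_succ hq j

theorem qDilogCoeff_sum_succ_left (hq : ‖q‖ < 1) {a b : ℕ} (hab : a < b) :
    (1 - q ^ (2 * (a + 1))) * ∑ k ∈ range (a + 2),
        qDilogCoeff q (a + 1 - k) * qDilogCoeff q k * qDilogCoeff q (b - k) * q ^ (k ^ 2) =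
      -q ^ (2 * b + 1) * ∑ k ∈ range (a + 1),
        qDilogCoeff q (a - k) * qDilogCoeff q k * qDilogCoeff q (b - k) * q ^ (k ^ 2) := by
  set F : ℕ → ℂ := fun k =>
    qDilogCoeff q (a + 1 - k) * qDilogCoeff q k * qDilogCoeff q (b - k) * q ^ (k ^ 2)
  -- In this split the first summand vanishes at `k = a + 1` and the second at `k = 0`;
  -- `qDilogCoeff_pentagon_step` pairs the first at `k` with the second at `k + 1`.
  have hsplit : ∀ k ∈ range (a + 2), (1 - q ^ (2 * (a + 1))) * F k =
      q ^ (2 * k) * (1 - q ^ (2 * (a + 1 - k))) * F k + (1 - q ^ (2 * k)) * F k := by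
    intro k hk
    rw [show 2 * (a + 1) = 2 * k + 2 * (a + 1 - k) by grind, pow_add]
    ring
  rw [mul_sum, sum_congr rfl hsplit, sum_add_distrib, sum_range_succ, sum_range_succ' _ (a + 1)]
  simp only [Nat.sub_self, mul_zero, pow_zero, sub_self, zero_mul, add_zero, ← sum_add_distrib,
    mul_sum]
  refine sum_congr rfl fun k hk => ?_
  obtain ⟨i, rfl⟩ : ∃ i, a = i + k := ⟨a - k, by grind⟩
  obtain ⟨j, rfl⟩ : ∃ j, b = k + j + 1 := ⟨b - k - 1, by grind⟩
  simp only [F, show i + k + 1 - k = i + 1 by omega, show i + k - k = i by omega,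
    show i + k + 1 - (k + 1) = i by omega, show k + j + 1 - k = j + 1 by omega,
    show k + j + 1 - (k + 1) = j by omega]
  linear_combination qDilogCoeff_pentagon_step hq i k j

theorem qDilogCoeff_vandermonde_of_le (hq : ‖q‖ < 1) {a b : ℕ} (hab : a ≤ b) :
    ∑ k ∈ range (a + 1),
        qDilogCoeff q (a - k) * qDilogCoeff q k * qDilogCoeff q (b - k) * q ^ (k ^ 2) =
      q ^ (2 * (a * b)) * qDilogCoeff q a * qDilogCoeff q b := by
  induction a with
  | zero => simp
  | succ a ih =>
    refine mul_left_cancel₀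
      (one_sub_pow_ne_zero_of_norm_lt_one hq (n := 2 * (a + 1)) (by omega)) ?_
    rw [qDilogCoeff_sum_succ_left hq hab, ih (by omega)]
    linear_combination -q ^ (2 * (a * b) + 2 * b) * qDilogCoeff q b * qDilogCoeff_succ hq a

theorem qDilogCoeff_vandermonde (hq : ‖q‖ < 1) (a b : ℕ) :
    ∑ k ∈ range (min a b + 1),
        qDilogCoeff q (a - k) * qDilogCoeff q k * qDilogCoeff q (b - k) * q ^ (k ^ 2) =
      q ^ (2 * (a * b)) * qDilogCoeff q a * qDilogCoeff q b := by
  rcases le_total a b with hab | hba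
  · rw [min_eq_left hab, qDilogCoeff_vandermonde_of_le hq hab]
  · rw [min_eq_right hba, mul_comm a b, mul_right_comm, ← qDilogCoeff_vandermonde_of_le hq hba]
    exact sum_congr rfl fun k _ => by ring

theorem summable_norm_qDilogCoeff_smul_pow {A : Type*} [SeminormedRing A] [NormedSpace ℂ A]
    (hq : ‖q‖ < 1) {W : A} (hW : ‖q‖ * ‖W‖ < 1) :
    Summable fun n => ‖qDilogCoeff q n • W ^ n‖ := by
  obtain ⟨r, hqW, hr⟩ := exists_between hW
  have hlim : Tendsto (fun n : ℕ => r * ‖1 - q ^ (2 * (n + 1))‖) atTop (𝓝 r) := by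
    have h := (tendsto_pow_atTop_nhds_zero_of_norm_lt_one hq).comp
      (tendsto_id.const_mul_atTop' (by norm_num : 0 < 2) |>.comp (tendsto_add_atTop_nat 1))
    simpa using ((tendsto_const_nhds (x := (1 : ℂ))).sub h).norm.const_mul r
  refine summable_of_ratio_norm_eventually_le hr ?_
  filter_upwards [hlim.eventually (eventually_gt_nhds hqW)] with n hn
  have hrec :
      ‖1 - q ^ (2 * (n + 1))‖ * ‖qDilogCoeff q (n + 1)‖ = ‖q‖ * ‖qDilogCoeff q n‖ := by
    rw [← norm_mul, qDilogCoeff_succ hq, norm_mul, norm_neg]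
  have hpos : 0 < ‖1 - q ^ (2 * (n + 1))‖ :=
    norm_pos_iff.2 (one_sub_pow_ne_zero_of_norm_lt_one hq (by omega))
  rw [norm_norm, norm_norm, norm_smul, norm_smul, pow_succ]
  refine le_of_mul_le_mul_left ?_ hpos
  calc ‖1 - q ^ (2 * (n + 1))‖ * (‖qDilogCoeff q (n + 1)‖ * ‖W ^ n * W‖)
      ≤ ‖1 - q ^ (2 * (n + 1))‖ * ‖qDilogCoeff q (n + 1)‖ * (‖W ^ n‖ * ‖W‖) := by
        rw [mul_assoc]; gcongr; exact norm_mul_le _ _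
    _ = ‖q‖ * ‖W‖ * (‖qDilogCoeff q n‖ * ‖W ^ n‖) := by rw [hrec]; ring
    _ ≤ r * ‖1 - q ^ (2 * (n + 1))‖ * (‖qDilogCoeff q n‖ * ‖W ^ n‖) := by gcongr
    _ = ‖1 - q ^ (2 * (n + 1))‖ * (r * (‖qDilogCoeff q n‖ * ‖W ^ n‖)) := by ring

end Coefficients

section Commutation

variable {R A : Type*} [CommSemiring R] [Semiring A] [Algebra R A] {t : R} {U V : A}

theorem mul_pow_of_mul_eq_smul (h : U * V = t • (V * U)) (n : ℕ) :
    U * V ^ n = t ^ n • (V ^ n * U) := by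
  induction n with
  | zero => simp
  | succ n ih =>
    rw [pow_succ, ← mul_assoc, ih, smul_mul_assoc, mul_assoc, h, mul_smul_comm, smul_smul,
      ← mul_assoc, ← pow_succ, pow_succ t]

theorem pow_mul_pow_of_mul_eq_smul (h : U * V = t • (V * U)) (m n : ℕ) :
    U ^ m * V ^ n = t ^ (m * n) • (V ^ n * U ^ m) := by
  induction m with
  | zero => simp
  | succ m ih =>
    rw [pow_succ, mul_assoc, mul_pow_of_mul_eq_smul h n, mul_smul_comm, ← mul_assoc, ih,
      smul_mul_assoc, smul_smul, mul_assoc, ← pow_succ, ← pow_add, add_comm, ← Nat.succ_mul]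

theorem smul_mul_pow_of_mul_eq_sq_smul (h : U * V = t ^ 2 • (V * U)) (k : ℕ) :
    (t • (V * U)) ^ k = t ^ (k ^ 2) • (V ^ k * U ^ k) := by
  induction k with
  | zero => simp
  | succ k ih =>
    have hcomm : U ^ k * V = (t ^ 2) ^ k • (V * U ^ k) := by
      simpa using pow_mul_pow_of_mul_eq_smul h k 1
    rw [pow_succ, ih, smul_mul_smul_comm, mul_assoc, ← mul_assoc (U ^ k), hcomm, smul_mul_assoc,
      mul_smul_comm, smul_smul, pow_succ V, pow_succ U, mul_assoc (V ^ k), mul_assoc V]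
    congr 1
    ring

end Commutation

theorem inv_smul_mul_of_mul_eq_sq_smul {K A : Type*} [Field K] [Semiring A] [Algebra K A]
    {q : K} {U V : A} (h : U * V = q ^ 2 • (V * U)) : q⁻¹ • (U * V) = q • (V * U) := by
  rw [h, smul_smul, sq, ← mul_assoc, inv_mul_mul_self]

def sigmaRangeMinEquiv : (Σ p : ℕ × ℕ, Fin (min p.1 p.2 + 1)) ≃ (ℕ × ℕ) × ℕ where
  toFun x := ((x.1.1 - x.2, x.2), x.1.2 - x.2)
  invFun z := ⟨(z.1.1 + z.1.2, z.1.2 + z.2), ⟨z.1.2, by omega⟩⟩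
  left_inv := by
    rintro ⟨⟨a, b⟩, ⟨k, hk⟩⟩
    refine Sigma.ext ?_ ?_
    · simp only [Prod.mk.injEq]
      omega
    · rw [Fin.heq_ext_iff (by simp only; omega)]
  right_inv := by
    rintro ⟨⟨i, k⟩, j⟩
    simp

theorem tsum_eq_tsum_sum_range_min {M : Type*} [AddCommMonoid M] [TopologicalSpace M]
    [ContinuousAdd M] [T3Space M] {f : (ℕ × ℕ) × ℕ → M} (hf : Summable f) :
    ∑' z, f z = ∑' p : ℕ × ℕ, ∑ k ∈ range (min p.1 p.2 + 1), f ((p.1 - k, k), p.2 - k) := by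
  rw [← sigmaRangeMinEquiv.tsum_eq]
  refine (Summable.tsum_sigma' (fun _ => (hasSum_fintype _).summable)
    (sigmaRangeMinEquiv.summable_iff.2 hf)).trans ?_
  exact tsum_congr fun p => by
    rw [tsum_fintype, ← Fin.sum_univ_eq_sum_range (fun k => f ((p.1 - k, k), p.2 - k))]
    rfl

theorem sum_range_min_pentagon_terms {A : Type*} [Ring A] [Algebra ℂ A] {q : ℂ} (hq : ‖q‖ < 1)
    {U V : A} (hUV : U * V = q ^ 2 • (V * U)) (a b : ℕ) :
    ∑ k ∈ range (min a b + 1), qDilogCoeff q (a - k) • V ^ (a - k) *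
        (qDilogCoeff q k • (q • (V * U)) ^ k) * (qDilogCoeff q (b - k) • U ^ (b - k)) =
      qDilogCoeff q b • U ^ b * (qDilogCoeff q a • V ^ a) := by
  have hterm : ∀ k ∈ range (min a b + 1), qDilogCoeff q (a - k) • V ^ (a - k) *
      (qDilogCoeff q k • (q • (V * U)) ^ k) * (qDilogCoeff q (b - k) • U ^ (b - k)) =
      (qDilogCoeff q (a - k) * qDilogCoeff q k * qDilogCoeff q (b - k) * q ^ (k ^ 2)) •
        (V ^ a * U ^ b) := by
    intro k hk
    have hka : a - k + k = a := Nat.sub_add_cancel (by grind)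
    have hkb : k + (b - k) = b := Nat.add_sub_cancel' (by grind)
    rw [smul_mul_pow_of_mul_eq_sq_smul hUV, smul_smul, smul_mul_smul_comm, smul_mul_smul_comm,
      ← hka, ← hkb, pow_add, pow_add, hka, hkb]
    congr 1
    · ring
    · simp only [mul_assoc]
  rw [sum_congr rfl hterm, ← sum_smul, qDilogCoeff_vandermonde hq, smul_mul_smul_comm,
    pow_mul_pow_of_mul_eq_smul hUV, smul_smul]
  congr 1
  ring

theorem quantumPsiB_pentagon_general {A : Type*} [NormedRing A] [NormedAlgebra ℂ A]
    [CompleteSpace A] (q : ℂ) (hq1 : ‖q‖ < 1) (U V : A)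
    (hUV : U * V = q ^ 2 • (V * U)) (hU : ‖U‖ < 1) (hV : ‖V‖ < 1) :
    quantumPsiB q U * quantumPsiB q V =
      quantumPsiB q V * quantumPsiB q (q⁻¹ • (U * V)) * quantumPsiB q U := by
  have hsummable {W : A} (hW : ‖W‖ ≤ 1) : Summable fun n => ‖qDilogCoeff q n • W ^ n‖ :=
    summable_norm_qDilogCoeff_smul_pow hq1
      (mul_lt_one_of_nonneg_of_lt_one_left (norm_nonneg q) hq1 hW)
  have hVU : ‖q • (V * U)‖ ≤ 1 := calc
    ‖q • (V * U)‖ ≤ ‖q‖ * (‖V‖ * ‖U‖) :=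
      (norm_smul_le q _).trans (by gcongr; exact norm_mul_le _ _)
    _ ≤ 1 := mul_le_one₀ hq1.le (by positivity) (mul_le_one₀ hV.le (norm_nonneg U) hU.le)
  have sU := hsummable hU.le
  have sV := hsummable hV.le
  have sVU := hsummable hVU
  rw [inv_smul_mul_of_mul_eq_sq_smul hUV]
  simp only [quantumPsiB_eq_tsum]
  rw [tsum_mul_tsum_of_summable_norm sU sV, tsum_mul_tsum_of_summable_norm sV sVU,
    tsum_mul_tsum_of_summable_norm (sV.mul_norm sVU) sU,
    tsum_eq_tsum_sum_range_min (summable_mul_of_summable_norm (sV.mul_norm sVU) sU),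
    ← (Equiv.prodComm ℕ ℕ).tsum_eq]
  exact tsum_congr fun p => (sum_range_min_pentagon_terms hq1 hUV p.1 p.2).symm

/-- Pentagon identity for the quantum dilogarithm in a complex unital Banach algebra:
if `UV = q² VU`, then `Ψ_q(U) Ψ_q(V) = Ψ_q(V) Ψ_q(q⁻¹ UV) Ψ_q(U)`. -/
theorem quantumPsiB_pentagon {A : Type*} [NormedRing A] [NormedAlgebra ℂ A]
    [CompleteSpace A] (q : ℂ) (hq0 : 0 < ‖q‖) (hq1 : ‖q‖ < 1) (U V : A)
    (hUV : U * V = q ^ 2 • (V * U)) (hU : ‖U‖ < 1) (hV : ‖V‖ < 1) :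
    quantumPsiB q U * quantumPsiB q V =
      quantumPsiB q V * quantumPsiB q (q⁻¹ • (U * V)) * quantumPsiB q U :=
  quantumPsiB_pentagon_general q hq1 U V hUV hU hV
end

section
/- Volkov's pentagon identity (quantum dilogarithm identity in universal form for type A₂): let 𝒜 be a complex unital Banach algebra, q ∈ ℂ with 0 < |q| < 1, and X, Y ∈ 𝒜 with Y·X = q²·X·Y, ‖X‖ < 1/4 and ‖Y‖ < 1/4. Then 1 + qY, 1 + qX and 1 + qX + qY are invertible, the elements X(1+qY)^{−1}, qX(1+qX+qY)^{−1}Y, (1+qX)^{−1}Y, X, Y all have norm < 1, the corresponding values of Ψ_q are invertible, and Ψ_q(X(1+qY)^{−1})^{−1} · Ψ_q(qX(1+qX+qY)^{−1}Y)^{−1} · Ψ_q((1+qX)^{−1}Y)^{−1} · Ψ_q(X) · Ψ_q(Y) = 1. -/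
/-!
Everything rests on the functional equation `Ψ(q²W) = (1 + qW) Ψ(W)` and on
`Ψ(q^{2m} W) → Ψ(0) = 1`. Descending from a large `m` shows that `Ψ(W)` is invertible. If
`VU = q²UV`, the defect `Ψ(q^{2m}U) Ψ(q^{2m}V) - Ψ(q^{2m}(U + V))` is multiplied by
`1 + q^{2m+1}(U + V)` when `m` increases by one; since `∏ₖ (1 - ‖q^{2k+1}(U + V)‖)` is bounded
below and the defect tends to `0`, it vanishes: `Ψ(U) Ψ(V) = Ψ(U + V)`. If `YX = q²XY`, then
`Y Ψ(X) = (1 + qX) Ψ(X) Y`, so `Ψ(X)` conjugates `Y` into `(1 + qX)⁻¹ Y` and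
`Ψ((1 + qX)⁻¹ Y) Ψ(X) = Ψ(X) Ψ(Y)`.

For the pentagon put `U = X(1 + qY)⁻¹`. Then `X = U + qUY`, `YU = q²UY`, and
`(1 + qU) X = U (1 + qX + qY)` turns the middle argument into `(1 + qU)⁻¹ qUY`, so
`Ψ((1+qX)⁻¹Y) Ψ((1+qU)⁻¹qUY) Ψ(U) = Ψ((1+qX)⁻¹Y) Ψ(U) Ψ(qUY) = Ψ((1+qX)⁻¹Y) Ψ(X) = Ψ(X) Ψ(Y)`.
-/

open Finset Filter Topology

theorem Real.exp_neg_le_prod_one_sub_mul_pow {t s : ℝ} (ht0 : 0 ≤ t) (ht : t < 1)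
    (hs0 : 0 ≤ s) (hs : s < 1) (n : ℕ) :
    Real.exp (-(t / ((1 - t) * (1 - s)))) ≤ ∏ k ∈ range n, (1 - t * s ^ k) := by
  have factor (k : ℕ) : Real.exp (-(t * s ^ k / (1 - t))) ≤ 1 - t * s ^ k := by
    have hx0 : 0 ≤ t * s ^ k := by positivity
    have hxt : t * s ^ k ≤ t := mul_le_of_le_one_right ht0 (pow_le_one₀ hs0 hs.le)
    rw [Real.exp_neg, inv_le_comm₀ (Real.exp_pos _) (by linarith)]
    calc (1 - t * s ^ k)⁻¹ = t * s ^ k / (1 - t * s ^ k) + 1 := by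
          field_simp [show 1 - t * s ^ k ≠ 0 by linarith]; ring
      _ ≤ t * s ^ k / (1 - t) + 1 := by gcongr
      _ ≤ Real.exp (t * s ^ k / (1 - t)) := Real.add_one_le_exp _
  have hsum : ∑ k ∈ range n, t * s ^ k / (1 - t) ≤ t / ((1 - t) * (1 - s)) := by
    have hgeom : ∑ k ∈ range n, s ^ k ≤ 1 / (1 - s) := by
      have := geom_sum_Ico_le_of_lt_one (m := 0) (n := n) hs0 hs
      rwa [← range_eq_Ico, pow_zero] at this
    calc ∑ k ∈ range n, t * s ^ k / (1 - t) = t / (1 - t) * ∑ k ∈ range n, s ^ k := by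
          rw [mul_sum]; exact sum_congr rfl fun k _ => by ring
      _ ≤ t / (1 - t) * (1 / (1 - s)) := by gcongr
      _ = t / ((1 - t) * (1 - s)) := by field_simp
  calc Real.exp (-(t / ((1 - t) * (1 - s))))
      ≤ Real.exp (-∑ k ∈ range n, t * s ^ k / (1 - t)) := by gcongr
    _ = ∏ k ∈ range n, Real.exp (-(t * s ^ k / (1 - t))) := by
        rw [← sum_neg_distrib, Real.exp_sum]
    _ ≤ ∏ k ∈ range n, (1 - t * s ^ k) :=
        prod_le_prod (fun _ _ => (Real.exp_pos _).le) fun k _ => factor k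

theorem norm_pow_le_max_one_mul {R : Type*} [NormedRing R] (W : R) (n : ℕ) :
    ‖W ^ n‖ ≤ max ‖(1 : R)‖ 1 * ‖W‖ ^ n := by
  rcases n.eq_zero_or_pos with rfl | hn
  · simp
  · exact (norm_pow_le' W hn).trans (le_mul_of_one_le_left (by positivity) (le_max_right _ _))

/-- `‖(1 + z) D‖ ≥ (1 - ‖z‖) ‖D‖`, so `‖D m‖` is at least `∏ k < m, (1 - t s^k)` times `‖D 0‖`. -/
theorem eq_zero_of_tendsto_of_succ_eq_one_add_mul {R : Type*} [NormedRing R] {D z : ℕ → R}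
    {t s : ℝ} (ht0 : 0 ≤ t) (ht : t < 1) (hs0 : 0 ≤ s) (hs : s < 1)
    (hz : ∀ k, ‖z k‖ ≤ t * s ^ k) (hD : ∀ m, D (m + 1) = (1 + z m) * D m)
    (hlim : Tendsto D atTop (𝓝 0)) : D 0 = 0 := by
  have hfactor (k : ℕ) : 0 ≤ 1 - t * s ^ k := by
    nlinarith [pow_le_one₀ hs0 hs.le (n := k), pow_nonneg hs0 k]
  have hgrowth (m : ℕ) : (∏ k ∈ range m, (1 - t * s ^ k)) * ‖D 0‖ ≤ ‖D m‖ := by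
    induction m with
    | zero => simp
    | succ m ih =>
      have hstep : ‖D m‖ * (1 - t * s ^ m) ≤ ‖D (m + 1)‖ := by
        have : ‖D m‖ ≤ ‖D (m + 1)‖ + ‖z m‖ * ‖D m‖ := by
          calc ‖D m‖ = ‖D (m + 1) - z m * D m‖ := by
                rw [hD, add_mul, one_mul, add_sub_cancel_right]
            _ ≤ ‖D (m + 1)‖ + ‖z m‖ * ‖D m‖ :=
                (norm_sub_le _ _).trans (by gcongr; exact norm_mul_le _ _)
        nlinarith [hz m, norm_nonneg (D m)]
      rw [prod_range_succ, mul_right_comm]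
      exact (mul_le_mul_of_nonneg_right ih (hfactor m)).trans hstep
  have hc : Real.exp (-(t / ((1 - t) * (1 - s)))) * ‖D 0‖ ≤ 0 :=
    ge_of_tendsto' (by simpa using hlim.norm) fun m =>
      (mul_le_mul_of_nonneg_right (Real.exp_neg_le_prod_one_sub_mul_pow ht0 ht hs0 hs m)
        (norm_nonneg _)).trans (hgrowth m)
  exact norm_le_zero_iff.mp (nonpos_of_mul_nonpos_right hc (Real.exp_pos _))

theorem Commute.ringInverse_right {M₀ : Type*} [MonoidWithZero M₀] {a b : M₀}
    (h : Commute a b) : Commute a (Ring.inverse b) := by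
  by_cases hb : IsUnit b
  · obtain ⟨u, rfl⟩ := hb
    rw [Ring.inverse_unit]
    exact h.units_inv_right
  · rw [Ring.inverse_non_unit _ hb]
    exact Commute.zero_right a

theorem Ring.inverse_mul_inverse_mul_inverse_mul_mul_eq_one {M₀ : Type*} [MonoidWithZero M₀]
    {a b c x y : M₀} (ha : IsUnit a) (hb : IsUnit b) (hc : IsUnit c) (h : c * (b * a) = x * y) :
    Ring.inverse a * Ring.inverse b * Ring.inverse c * x * y = 1 := by
  rw [mul_assoc _ x, ← h, mul_assoc, mul_assoc, Ring.inverse_mul_cancel_left _ _ hc,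
    Ring.inverse_mul_cancel_left _ _ hb, Ring.inverse_mul_cancel _ ha]

theorem mul_pow_eq_smul_pow_mul {R B : Type*} [CommSemiring R] [Semiring B] [Algebra R B]
    {c : R} {X Y : B} (h : Y * X = c • (X * Y)) (n : ℕ) : Y * X ^ n = c ^ n • (X ^ n * Y) := by
  induction n with
  | zero => simp
  | succ n ih =>
    rw [pow_succ, ← mul_assoc, ih, smul_mul_assoc, mul_assoc, h, mul_smul_comm, smul_smul,
      ← mul_assoc, ← pow_succ]

theorem smul_mul_inverse_one_add_add_mul {R B : Type*} [CommRing R] [Ring B] [Algebra R B]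
    (q : R) {X Y U : B} (hU : U * (1 + q • Y) = X) (hw : IsUnit (1 + q • X + q • Y))
    (hqU : IsUnit (1 + q • U)) :
    q • (X * Ring.inverse (1 + q • X + q • Y) * Y) = Ring.inverse (1 + q • U) * (q • (U * Y)) := by
  have key : (1 + q • U) * X = U * (1 + q • X + q • Y) := by
    rw [add_mul, one_mul, smul_mul_assoc, add_right_comm, mul_add, hU, mul_smul_comm]
  calc q • (X * Ring.inverse (1 + q • X + q • Y) * Y)
      = q • (Ring.inverse (1 + q • U) * ((1 + q • U) * X) * Ring.inverse (1 + q • X + q • Y)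
          * Y) := by
        rw [Ring.inverse_mul_cancel_left _ _ hqU]
    _ = Ring.inverse (1 + q • U) * (q • (U * Y)) := by
        rw [key, ← mul_assoc, Ring.mul_inverse_cancel_right _ _ hw, mul_smul_comm, mul_assoc]

section CompleteNormedRing

variable {R : Type*} [NormedRing R] [CompleteSpace R]

theorem isUnit_one_add_of_norm_lt_one {x : R} (h : ‖x‖ < 1) : IsUnit (1 + x) := by
  simpa using isUnit_one_sub_of_norm_lt_one (x := -x) (by rwa [norm_neg])

theorem norm_inverse_one_add_mul_le {x : R} (hx : ‖x‖ < 1) (y : R) :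
    ‖Ring.inverse (1 + x) * y‖ ≤ ‖y‖ / (1 - ‖x‖) := by
  set c := Ring.inverse (1 + x) * y
  have hc : c = y - x * c := by
    rw [eq_sub_iff_add_eq, ← one_add_mul,
      Ring.mul_inverse_cancel_left _ _ (isUnit_one_add_of_norm_lt_one hx)]
  have : ‖c‖ ≤ ‖y‖ + ‖x‖ * ‖c‖ := by
    conv_lhs => rw [hc]
    exact (norm_sub_le _ _).trans (by gcongr; exact norm_mul_le _ _)
  rw [le_div_iff₀ (by linarith)]
  linarith

theorem norm_mul_inverse_one_add_le {x : R} (hx : ‖x‖ < 1) (y : R) :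
    ‖y * Ring.inverse (1 + x)‖ ≤ ‖y‖ / (1 - ‖x‖) := by
  set c := y * Ring.inverse (1 + x)
  have hc : c = y - c * x := by
    rw [eq_sub_iff_add_eq, ← mul_one_add,
      Ring.inverse_mul_cancel_right _ _ (isUnit_one_add_of_norm_lt_one hx)]
  have : ‖c‖ ≤ ‖y‖ + ‖c‖ * ‖x‖ := by
    conv_lhs => rw [hc]
    exact (norm_sub_le _ _).trans (by gcongr; exact norm_mul_le _ _)
  rw [le_div_iff₀ (by linarith)]
  linarith

end CompleteNormedRing

noncomputable def psiCoeff (q : ℂ) (n : ℕ) : ℂ :=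
  (-q) ^ n / ∏ k ∈ range n, (1 - q ^ (2 * (k + 1)))

section Coefficients

variable {q : ℂ}

theorem psiCoeff_succ_mul_sub (hq : ‖q‖ < 1) (n : ℕ) :
    psiCoeff q (n + 1) * (q ^ 2) ^ (n + 1) - psiCoeff q (n + 1) = q * psiCoeff q n := by
  have hfactor : 1 - q ^ (2 * (n + 1)) ≠ 0 := by
    refine sub_ne_zero.mpr (Ne.symm fun h => ?_)
    have : ‖q ^ (2 * (n + 1))‖ < 1 := by
      rw [norm_pow]; exact pow_lt_one₀ (norm_nonneg q) hq (by omega)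
    simp [h] at this
  have hsucc : psiCoeff q (n + 1) = psiCoeff q n * (-q / (1 - q ^ (2 * (n + 1)))) := by
    rw [psiCoeff, psiCoeff, prod_range_succ, pow_succ, mul_div_mul_comm]
  rw [hsucc, ← pow_mul]
  field_simp
  ring

theorem norm_psiCoeff_le (hq : ‖q‖ < 1) (n : ℕ) :
    ‖psiCoeff q n‖ ≤ Real.exp (‖q‖ ^ 2 / ((1 - ‖q‖ ^ 2) * (1 - ‖q‖ ^ 2))) * ‖q‖ ^ n := by
  set s := ‖q‖ ^ 2
  have hs0 : 0 ≤ s := by positivity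
  have hs : s < 1 := pow_lt_one₀ (norm_nonneg q) hq two_ne_zero
  have hdenom :
      Real.exp (-(s / ((1 - s) * (1 - s)))) ≤ ‖∏ k ∈ range n, (1 - q ^ (2 * (k + 1)))‖ := by
    refine (Real.exp_neg_le_prod_one_sub_mul_pow hs0 hs hs0 hs n).trans ?_
    rw [norm_prod]
    refine prod_le_prod (fun k _ => ?_) fun k _ => ?_
    · nlinarith [pow_le_one₀ hs0 hs.le (n := k), pow_nonneg hs0 k]
    · have : s * s ^ k = ‖q ^ (2 * (k + 1))‖ := by rw [norm_pow, ← pow_succ', ← pow_mul]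
      rw [this, ← norm_one (α := ℂ)]
      exact norm_sub_norm_le _ _
  rw [psiCoeff, norm_div, norm_pow, norm_neg, div_le_iff₀ ((Real.exp_pos _).trans_le hdenom),
    mul_comm, ← mul_assoc]
  refine le_mul_of_one_le_left (by positivity) ?_
  calc (1 : ℝ) = Real.exp (-(s / ((1 - s) * (1 - s)))) * Real.exp (s / ((1 - s) * (1 - s))) := by
        rw [← Real.exp_add, neg_add_cancel, Real.exp_zero]
    _ ≤ _ := by gcongr

end Coefficients

section BanachAlgebra

variable {A : Type*} [NormedRing A] [NormedAlgebra ℂ A] {q : ℂ}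

theorem quantumPsiB_zero : quantumPsiB q (0 : A) = 1 := by
  rw [quantumPsiB, tsum_eq_single 0 fun n hn => by simp [zero_pow hn]]
  simp

theorem exists_norm_psiCoeff_smul_pow_le (hq : ‖q‖ < 1) :
    ∃ C, ∀ (W : A) (n : ℕ), ‖psiCoeff q n • W ^ n‖ ≤ C * (‖q‖ * ‖W‖) ^ n := by
  refine ⟨Real.exp (‖q‖ ^ 2 / ((1 - ‖q‖ ^ 2) * (1 - ‖q‖ ^ 2))) * max ‖(1 : A)‖ 1,
    fun W n => ?_⟩
  rw [norm_smul, mul_pow]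
  calc ‖psiCoeff q n‖ * ‖W ^ n‖
      ≤ (Real.exp (‖q‖ ^ 2 / ((1 - ‖q‖ ^ 2) * (1 - ‖q‖ ^ 2))) * ‖q‖ ^ n) *
        (max ‖(1 : A)‖ 1 * ‖W‖ ^ n) :=
        mul_le_mul (norm_psiCoeff_le hq n) (norm_pow_le_max_one_mul W n) (norm_nonneg _)
          (by positivity)
    _ = _ := by ring

theorem norm_mul_norm_sq_pow_smul_lt_one (hq : ‖q‖ < 1) {W : A} (hW : ‖q‖ * ‖W‖ < 1) (m : ℕ) :
    ‖q‖ * ‖(q ^ 2) ^ m • W‖ < 1 := by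
  refine lt_of_le_of_lt ?_ hW
  rw [norm_smul, norm_pow, norm_pow, mul_left_comm]
  exact mul_le_of_le_one_left (by positivity)
    (pow_le_one₀ (by positivity) (pow_le_one₀ (norm_nonneg _) hq.le))

variable [CompleteSpace A]

theorem hasSum_quantumPsiB (hq : ‖q‖ < 1) {W : A} (hW : ‖q‖ * ‖W‖ < 1) :
    HasSum (fun n => psiCoeff q n • W ^ n) (quantumPsiB q W) := by
  obtain ⟨C, hC⟩ := exists_norm_psiCoeff_smul_pow_le (A := A) hq
  exact (((summable_geometric_of_lt_one (by positivity) hW).mul_left C).of_norm_bounded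
    (hC W)).hasSum

theorem continuousAt_quantumPsiB_zero (hq : ‖q‖ < 1) : ContinuousAt (quantumPsiB q) (0 : A) := by
  obtain ⟨C, hC⟩ := exists_norm_psiCoeff_smul_pow_le (A := A) hq
  have hC0 : 0 ≤ C := by simpa using (norm_nonneg _).trans (hC 0 0)
  refine ContinuousOn.continuousAt (s := Metric.closedBall 0 1) ?_
    (Metric.closedBall_mem_nhds 0 one_pos)
  refine continuousOn_tsum (fun n => (continuous_const.smul (continuous_pow n)).continuousOn)
    ((summable_geometric_of_lt_one (norm_nonneg q) hq).mul_left C) fun n W hW => ?_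
  refine (hC W n).trans ?_
  gcongr
  exact mul_le_of_le_one_right (norm_nonneg q) (by simpa using hW)

theorem tendsto_quantumPsiB_sq_pow_smul (hq : ‖q‖ < 1) (W : A) :
    Tendsto (fun m : ℕ => quantumPsiB q ((q ^ 2) ^ m • W)) atTop (𝓝 1) := by
  have hq2 : ‖q ^ 2‖ < 1 := by
    rw [norm_pow]; exact pow_lt_one₀ (norm_nonneg q) hq two_ne_zero
  have h0 : Tendsto (fun m : ℕ => (q ^ 2) ^ m • W) atTop (𝓝 0) := by
    simpa using (tendsto_pow_atTop_nhds_zero_of_norm_lt_one hq2).smul_const W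
  have := (continuousAt_quantumPsiB_zero hq).tendsto.comp h0
  rwa [quantumPsiB_zero] at this

theorem quantumPsiB_sq_smul (hq : ‖q‖ < 1) {W : A} (hW : ‖q‖ * ‖W‖ < 1) :
    quantumPsiB q (q ^ 2 • W) = (1 + q • W) * quantumPsiB q W := by
  have hf := hasSum_quantumPsiB hq hW
  have hdiff : HasSum (fun n => (psiCoeff q n * (q ^ 2) ^ n - psiCoeff q n) • W ^ n)
      (q • W * quantumPsiB q W) := by
    refine (hasSum_nat_add_iff' 1).mp ?_
    simp only [range_one, sum_singleton, pow_zero, mul_one, sub_self, zero_smul, sub_zero]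
    refine (hf.mul_left (q • W)).congr_fun fun n => ?_
    rw [psiCoeff_succ_mul_sub hq, smul_mul_smul_comm, mul_comm, pow_succ']
  change ∑' n, psiCoeff q n • (q ^ 2 • W) ^ n = _
  rw [add_mul, one_mul]
  refine ((hf.add hdiff).congr_fun fun n => ?_).tsum_eq
  rw [smul_pow, smul_smul, ← add_smul, add_sub_cancel, mul_comm]

theorem mul_quantumPsiB_of_mul_eq_smul (hq : ‖q‖ < 1) {X Y : A}
    (hXY : Y * X = q ^ 2 • (X * Y)) (hX : ‖q‖ * ‖X‖ < 1) :
    Y * quantumPsiB q X = (1 + q • X) * quantumPsiB q X * Y := by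
  have hX' : ‖q‖ * ‖q ^ 2 • X‖ < 1 := by simpa using norm_mul_norm_sq_pow_smul_lt_one hq hX 1
  rw [← quantumPsiB_sq_smul hq hX]
  refine ((hasSum_quantumPsiB hq hX).mul_left Y).unique
    (((hasSum_quantumPsiB hq hX').mul_right Y).congr_fun fun n => ?_)
  rw [mul_smul_comm, mul_pow_eq_smul_pow_mul hXY, smul_pow, smul_mul_assoc, smul_mul_assoc,
    smul_smul, mul_comm]

theorem quantumPsiB_units_conj (hq : ‖q‖ < 1) (u : Aˣ) {W : A} (hW : ‖q‖ * ‖W‖ < 1) :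
    quantumPsiB q (u * W * ↑u⁻¹) = u * quantumPsiB q W * ↑u⁻¹ := by
  change ∑' n, psiCoeff q n • (↑u * W * ↑u⁻¹) ^ n = _
  refine ((((hasSum_quantumPsiB hq hW).mul_left (u : A)).mul_right (↑u⁻¹ : A)).congr_fun
    fun n => ?_).tsum_eq
  rw [Units.conj_pow, mul_smul_comm, smul_mul_assoc]

theorem isUnit_quantumPsiB (hq : ‖q‖ < 1) {W : A} (hW : ‖q‖ * ‖W‖ < 1) :
    IsUnit (quantumPsiB q W) := by
  have hiter (m : ℕ) : IsUnit (quantumPsiB q ((q ^ 2) ^ m • W)) ↔ IsUnit (quantumPsiB q W) := by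
    induction m with
    | zero => simp
    | succ m ih =>
      have hWm := norm_mul_norm_sq_pow_smul_lt_one hq hW m
      obtain ⟨u, hu⟩ := isUnit_one_add_of_norm_lt_one (x := q • ((q ^ 2) ^ m • W))
        (by rwa [norm_smul])
      rw [pow_succ', mul_smul, quantumPsiB_sq_smul hq hWm, ← hu, Units.isUnit_units_mul, ih]
  obtain ⟨m, hm⟩ := ((tendsto_quantumPsiB_sq_pow_smul hq W).eventually
    (Units.isOpen.mem_nhds isUnit_one)).exists
  exact (hiter m).mp hm

theorem quantumPsiB_sq_smul_mul_quantumPsiB_sq_smul (hq : ‖q‖ < 1) {U V : A}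
    (hVU : V * U = q ^ 2 • (U * V)) (hU : ‖q‖ * ‖U‖ < 1) (hV : ‖q‖ * ‖V‖ < 1) :
    quantumPsiB q (q ^ 2 • U) * quantumPsiB q (q ^ 2 • V)
      = (1 + q • (U + V)) * (quantumPsiB q U * quantumPsiB q V) := by
  have hmove := mul_quantumPsiB_of_mul_eq_smul hq hVU hU
  rw [quantumPsiB_sq_smul hq hU, quantumPsiB_sq_smul hq hV]
  calc (1 + q • U) * quantumPsiB q U * ((1 + q • V) * quantumPsiB q V)
      = (1 + q • U) * quantumPsiB q U * quantumPsiB q V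
        + q • ((1 + q • U) * quantumPsiB q U * V * quantumPsiB q V) := by
        simp only [add_mul, mul_add, one_mul, smul_mul_assoc, mul_smul_comm, mul_assoc]
    _ = _ := by
        rw [← hmove]
        simp only [add_mul, one_mul, smul_add, smul_mul_assoc, mul_assoc]
        abel

theorem quantumPsiB_add_of_mul_eq_smul (hq : ‖q‖ < 1) {U V : A} (hVU : V * U = q ^ 2 • (U * V))
    (hU : ‖q‖ * ‖U‖ < 1) (hV : ‖q‖ * ‖V‖ < 1) (hUV : ‖q‖ * ‖U + V‖ < 1) :
    quantumPsiB q (U + V) = quantumPsiB q U * quantumPsiB q V := by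
  set D : ℕ → A := fun m => quantumPsiB q ((q ^ 2) ^ m • U) * quantumPsiB q ((q ^ 2) ^ m • V)
    - quantumPsiB q ((q ^ 2) ^ m • (U + V))
  suffices D 0 = 0 by simpa [D, sub_eq_zero, eq_comm] using this
  refine eq_zero_of_tendsto_of_succ_eq_one_add_mul (z := fun m => q • (q ^ 2) ^ m • (U + V))
    (by positivity) hUV (sq_nonneg ‖q‖) (pow_lt_one₀ (norm_nonneg q) hq two_ne_zero)
    (fun k => le_of_eq ?_) (fun m => ?_) ?_
  · rw [norm_smul, norm_smul, norm_pow, norm_pow]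
    ring
  · have hVUm :
        (q ^ 2) ^ m • V * (q ^ 2) ^ m • U = q ^ 2 • ((q ^ 2) ^ m • U * (q ^ 2) ^ m • V) := by
      rw [smul_mul_smul_comm, smul_mul_smul_comm, hVU, smul_comm]
    have hsucc (W : A) : (q ^ 2) ^ (m + 1) • W = q ^ 2 • (q ^ 2) ^ m • W := by
      rw [pow_succ', mul_smul]
    simp only [D, hsucc]
    rw [quantumPsiB_sq_smul_mul_quantumPsiB_sq_smul hq hVUm
        (norm_mul_norm_sq_pow_smul_lt_one hq hU m) (norm_mul_norm_sq_pow_smul_lt_one hq hV m),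
      quantumPsiB_sq_smul hq (norm_mul_norm_sq_pow_smul_lt_one hq hUV m), ← smul_add, mul_sub]
  · simpa [D] using ((tendsto_quantumPsiB_sq_pow_smul hq U).mul
      (tendsto_quantumPsiB_sq_pow_smul hq V)).sub (tendsto_quantumPsiB_sq_pow_smul hq (U + V))

theorem quantumPsiB_inverse_one_add_smul_mul_mul_quantumPsiB (hq : ‖q‖ < 1) {X Y : A}
    (hXY : Y * X = q ^ 2 • (X * Y)) (hX : ‖q‖ * ‖X‖ < 1) (hY : ‖q‖ * ‖Y‖ < 1) :
    quantumPsiB q (Ring.inverse (1 + q • X) * Y) * quantumPsiB q X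
      = quantumPsiB q X * quantumPsiB q Y := by
  obtain ⟨u, hu⟩ := isUnit_quantumPsiB hq hX
  have hconj : Ring.inverse (1 + q • X) * Y = u * Y * ↑u⁻¹ := by
    rw [Units.eq_mul_inv_iff_mul_eq, hu, mul_assoc, mul_quantumPsiB_of_mul_eq_smul hq hXY hX,
      mul_assoc, Ring.inverse_mul_cancel_left _ _
        (isUnit_one_add_of_norm_lt_one (by rwa [norm_smul]))]
  rw [hconj, quantumPsiB_units_conj hq u hY, ← hu, Units.inv_mul_cancel_right]

theorem quantumPsiB_pentagon_s13 (hq : ‖q‖ < 1) {X Y U : A} (hXY : Y * X = q ^ 2 • (X * Y))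
    (hU : U * (1 + q • Y) = X) (hX : ‖q‖ * ‖X‖ < 1) (hY : ‖q‖ * ‖Y‖ < 1)
    (hqU : ‖q‖ * ‖U‖ < 1) (hqUY : ‖q‖ * ‖q • (U * Y)‖ < 1) :
    quantumPsiB q (Ring.inverse (1 + q • X) * Y) *
      (quantumPsiB q (Ring.inverse (1 + q • U) * (q • (U * Y))) * quantumPsiB q U)
      = quantumPsiB q X * quantumPsiB q Y := by
  have hv : IsUnit (1 + q • Y) := isUnit_one_add_of_norm_lt_one (by rwa [norm_smul])
  have hYU : Y * U = q ^ 2 • (U * Y) := by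
    have hUeq : U = X * Ring.inverse (1 + q • Y) := by
      rw [← hU, Ring.mul_inverse_cancel_right _ _ hv]
    have hcomm : Commute Y (Ring.inverse (1 + q • Y)) :=
      ((Commute.one_right Y).add_right ((Commute.refl Y).smul_right q)).ringInverse_right
    rw [hUeq, ← mul_assoc, hXY, smul_mul_assoc, mul_assoc, hcomm.eq, ← mul_assoc]
  have hUYU : q • (U * Y) * U = q ^ 2 • (U * q • (U * Y)) := by
    rw [smul_mul_assoc, mul_assoc, hYU, mul_smul_comm, mul_smul_comm, smul_comm, ← mul_assoc]
  have hsum : U + q • (U * Y) = X := by rw [← hU, mul_add, mul_one, mul_smul_comm]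
  rw [quantumPsiB_inverse_one_add_smul_mul_mul_quantumPsiB hq hUYU hqU hqUY,
    ← quantumPsiB_add_of_mul_eq_smul hq hUYU hqU hqUY (by rwa [hsum]), hsum,
    quantumPsiB_inverse_one_add_smul_mul_mul_quantumPsiB hq hXY hX hY]

end BanachAlgebra

theorem volkov_pentagon_general {A : Type*} [NormedRing A] [NormedAlgebra ℂ A]
    [CompleteSpace A] (q : ℂ) (hq1 : ‖q‖ < 1) (X Y : A)
    (hXY : Y * X = q ^ 2 • (X * Y)) (hX : ‖X‖ < 1 / 4) (hY : ‖Y‖ < 1 / 4) :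
    IsUnit (1 + q • Y) ∧ IsUnit (1 + q • X) ∧ IsUnit (1 + q • X + q • Y) ∧
    ‖X * Ring.inverse (1 + q • Y)‖ < 1 ∧
    ‖q • (X * Ring.inverse (1 + q • X + q • Y) * Y)‖ < 1 ∧
    ‖Ring.inverse (1 + q • X) * Y‖ < 1 ∧ ‖X‖ < 1 ∧ ‖Y‖ < 1 ∧
    IsUnit (quantumPsiB q (X * Ring.inverse (1 + q • Y))) ∧
    IsUnit (quantumPsiB q (q • (X * Ring.inverse (1 + q • X + q • Y) * Y))) ∧
    IsUnit (quantumPsiB q (Ring.inverse (1 + q • X) * Y)) ∧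
    Ring.inverse (quantumPsiB q (X * Ring.inverse (1 + q • Y))) *
      Ring.inverse (quantumPsiB q (q • (X * Ring.inverse (1 + q • X + q • Y) * Y))) *
      Ring.inverse (quantumPsiB q (Ring.inverse (1 + q • X) * Y)) *
      quantumPsiB q X * quantumPsiB q Y = 1 := by
  have hsmall {W : A} (hW : ‖W‖ < 1) : ‖q‖ * ‖W‖ < 1 :=
    mul_lt_one_of_nonneg_of_lt_one_left (norm_nonneg q) hq1 hW.le
  have hqsmul (W : A) : ‖q • W‖ ≤ ‖W‖ := by
    rw [norm_smul]; exact mul_le_of_le_one_left (norm_nonneg _) hq1.le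
  have hqX := (hqsmul X).trans_lt hX
  have hqY := (hqsmul Y).trans_lt hY
  have hv := isUnit_one_add_of_norm_lt_one (hqY.trans (by norm_num))
  have hw : IsUnit (1 + q • X + q • Y) := by
    rw [add_assoc]; exact isUnit_one_add_of_norm_lt_one ((norm_add_le _ _).trans_lt (by linarith))
  set U := X * Ring.inverse (1 + q • Y)
  have hU : ‖U‖ < 1 / 3 := (norm_mul_inverse_one_add_le (by linarith) X).trans_lt
    (by rw [div_lt_iff₀ (by linarith)]; linarith)
  have hC : ‖Ring.inverse (1 + q • X) * Y‖ < 1 / 3 :=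
    (norm_inverse_one_add_mul_le (by linarith) Y).trans_lt
      (by rw [div_lt_iff₀ (by linarith)]; linarith)
  have hqU := (hqsmul U).trans_lt hU
  have hUY : ‖q • (U * Y)‖ < 1 / 12 := (hqsmul _).trans_lt ((norm_mul_le _ _).trans_lt
    (by nlinarith [norm_nonneg U, norm_nonneg Y]))
  have hB : ‖Ring.inverse (1 + q • U) * (q • (U * Y))‖ < 1 / 8 :=
    (norm_inverse_one_add_mul_le (by linarith) _).trans_lt
      (by rw [div_lt_iff₀ (by linarith)]; linarith)
  have hUv : U * (1 + q • Y) = X := Ring.inverse_mul_cancel_right _ _ hv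
  rw [smul_mul_inverse_one_add_add_mul q hUv hw (isUnit_one_add_of_norm_lt_one (by linarith))]
  have hΨU := isUnit_quantumPsiB hq1 (hsmall (W := U) (by linarith))
  have hΨB := isUnit_quantumPsiB hq1 (hsmall (hB.trans (by norm_num)))
  have hΨC := isUnit_quantumPsiB hq1 (hsmall (hC.trans (by norm_num)))
  refine ⟨hv, isUnit_one_add_of_norm_lt_one (by linarith), hw, by linarith, by linarith,
    by linarith, by linarith, by linarith, hΨU, hΨB, hΨC, ?_⟩
  exact Ring.inverse_mul_inverse_mul_inverse_mul_mul_eq_one hΨU hΨB hΨC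
    (quantumPsiB_pentagon_s13 hq1 hXY hUv (hsmall (by linarith)) (hsmall (by linarith))
      (hsmall (by linarith)) (hsmall (by linarith)))

/-- Volkov's pentagon identity (quantum dilogarithm identity in universal form for
type `A₂`): if `YX = q² XY` with `‖X‖, ‖Y‖ < 1/4`, then
`Ψ_q(X(1+qY)⁻¹)⁻¹ Ψ_q(qX(1+qX+qY)⁻¹Y)⁻¹ Ψ_q((1+qX)⁻¹Y)⁻¹ Ψ_q(X) Ψ_q(Y) = 1`. -/
theorem volkov_pentagon {A : Type*} [NormedRing A] [NormedAlgebra ℂ A]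
    [CompleteSpace A] (q : ℂ) (hq0 : 0 < ‖q‖) (hq1 : ‖q‖ < 1) (X Y : A)
    (hXY : Y * X = q ^ 2 • (X * Y)) (hX : ‖X‖ < 1 / 4) (hY : ‖Y‖ < 1 / 4) :
    IsUnit (1 + q • Y) ∧ IsUnit (1 + q • X) ∧ IsUnit (1 + q • X + q • Y) ∧
    ‖X * Ring.inverse (1 + q • Y)‖ < 1 ∧
    ‖q • (X * Ring.inverse (1 + q • X + q • Y) * Y)‖ < 1 ∧
    ‖Ring.inverse (1 + q • X) * Y‖ < 1 ∧ ‖X‖ < 1 ∧ ‖Y‖ < 1 ∧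
    IsUnit (quantumPsiB q (X * Ring.inverse (1 + q • Y))) ∧
    IsUnit (quantumPsiB q (q • (X * Ring.inverse (1 + q • X + q • Y) * Y))) ∧
    IsUnit (quantumPsiB q (Ring.inverse (1 + q • X) * Y)) ∧
    Ring.inverse (quantumPsiB q (X * Ring.inverse (1 + q • Y))) *
      Ring.inverse (quantumPsiB q (q • (X * Ring.inverse (1 + q • X + q • Y) * Y))) *
      Ring.inverse (quantumPsiB q (Ring.inverse (1 + q • X) * Y)) *
      quantumPsiB q X * quantumPsiB q Y = 1 :=
  volkov_pentagon_general q hq1 X Y hXY hX hY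
end

section
/- Special Baker–Campbell–Hausdorff identity: let 𝒜 be a complex unital Banach algebra and A, B ∈ 𝒜. Set C = A·B − B·A, and assume C·A = A·C and C·B = B·C. Then exp(A)·exp(B) = exp(C/2)·exp(A+B). -/
/-!
If `c = [A, B]` commutes with `A` and `B`, then `exp (t A) B exp (-t A) = B + t c`, so
`F t = exp (t A) exp (t B)` solves `F' = (A + B + t c) F`. The same linear equation is solved by
`exp (t² c / 2) exp (t (A + B))`, whose inverse `K t` satisfies `K' = -K (A + B + t c)`;
hence `K t * F t` has zero derivative and equals `K 0 * F 0 = 1`. Take `t = 1`.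
-/

open NormedSpace

theorem mul_eq_mul_of_hasDerivAt_mul_of_hasDerivAt_neg_mul {𝕜 𝔸 : Type*} [RCLike 𝕜] [NormedRing 𝔸]
    [NormedAlgebra 𝕜 𝔸] {F K M : 𝕜 → 𝔸}
    (hF : ∀ t, HasDerivAt F (M t * F t) t) (hK : ∀ t, HasDerivAt K (-(K t * M t)) t)
    (s t : 𝕜) : K s * F s = K t * F t := by
  have h : ∀ t, HasDerivAt (K * F) 0 t := fun t => by
    simpa [mul_assoc] using (hK t).mul (hF t)
  exact is_const_of_deriv_eq_zero (fun t => (h t).differentiableAt) (fun t => (h t).deriv) s t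

/-- `𝕂` only supplies the `ℚ`-algebra structure that `exp_add_of_commute` asks for. -/
theorem exp_mul_exp_neg (𝕂 : Type*) {𝔸 : Type*} [RCLike 𝕂] [NormedRing 𝔸] [NormedAlgebra 𝕂 𝔸]
    [CompleteSpace 𝔸] (x : 𝔸) : exp x * exp (-x) = 1 := by
  let +nondep : NormedAlgebra ℚ 𝔸 := .restrictScalars ℚ 𝕂 𝔸
  rw [← exp_add_of_commute (Commute.refl x).neg_right, add_neg_cancel, exp_zero]

section

variable {𝕂 𝔸 : Type*} [RCLike 𝕂] [NormedRing 𝔸] [NormedAlgebra 𝕂 𝔸] [CompleteSpace 𝔸]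

theorem hasDerivAt_exp_smul_neg (x : 𝔸) (t : 𝕂) :
    HasDerivAt (fun u : 𝕂 => exp (u • -x)) (-(exp (t • -x) * x)) t := by
  simpa using hasDerivAt_exp_smul_const (-x) t

theorem exp_smul_mul_eq_add_smul_mul_exp_smul {x y c : 𝔸} (hxc : Commute x c)
    (hxy : x * y - y * x = c) (t : 𝕂) : exp (t • x) * y = (y + t • c) * exp (t • x) := by
  set F : 𝕂 → 𝔸 := fun t => exp (t • x) * y - (y + t • c) * exp (t • x)
  have hF : ∀ t, HasDerivAt F (x * F t) t := fun t => by
    have hxyc : x * (y + t • c) = c + (y + t • c) * x := by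
      rw [mul_add, add_mul, mul_smul_comm, smul_mul_assoc, hxc.eq, ← hxy]
      abel
    have hE := hasDerivAt_exp_smul_const' x t
    have hyc : HasDerivAt (fun t : 𝕂 => y + t • c) c t := by
      simpa using ((hasDerivAt_id t).smul_const c).const_add y
    refine ((hE.mul_const y).fun_sub (hyc.fun_mul hE)).congr_deriv ?_
    rw [mul_sub, ← mul_assoc x (y + t • c), hxyc]
    noncomm_ring
  have hKF := mul_eq_mul_of_hasDerivAt_mul_of_hasDerivAt_neg_mul hF (hasDerivAt_exp_smul_neg x) t 0
  simp only [F, zero_smul, exp_zero, add_zero, one_mul, neg_zero, mul_one, sub_self, mul_zero,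
    smul_neg] at hKF
  rw [← sub_eq_zero, ← one_mul (_ - _), ← exp_mul_exp_neg 𝕂 (t • x), mul_assoc, hKF, mul_zero]

theorem hasDerivAt_exp_half_sq_smul (x : 𝔸) (t : 𝕂) :
    HasDerivAt (fun u : 𝕂 => exp ((u ^ 2 / 2) • x)) (t • (exp ((t ^ 2 / 2) • x) * x)) t := by
  have hsq : HasDerivAt (fun u : 𝕂 => u ^ 2 / 2) t t := by
    simpa using (hasDerivAt_pow 2 t).div_const 2
  exact (hasDerivAt_exp_smul_const x (t ^ 2 / 2)).scomp t hsq

theorem exp_mul_exp_eq_exp_half_smul_mul_exp_add {A B c : 𝔸} (hc : A * B - B * A = c)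
    (hAc : Commute A c) (hBc : Commute B c) :
    exp A * exp B = exp ((1 / 2 : 𝕂) • c) * exp (A + B) := by
  set F : 𝕂 → 𝔸 := fun t => exp (t • A) * exp (t • B)
  set K : 𝕂 → 𝔸 := fun t => exp (t • -(A + B)) * exp ((t ^ 2 / 2) • -c)
  have hF : ∀ t, HasDerivAt F ((A + B + t • c) * F t) t := fun t => by
    refine ((hasDerivAt_exp_smul_const' A t).mul (hasDerivAt_exp_smul_const' B t)).congr_deriv ?_
    rw [← mul_assoc, exp_smul_mul_eq_add_smul_mul_exp_smul hAc hc t]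
    noncomm_ring
  have hK : ∀ t, HasDerivAt K (-(K t * (A + B + t • c))) t := fun t => by
    have hABc : Commute (A + B) (exp ((t ^ 2 / 2) • -c)) :=
      ((hAc.add_left hBc).neg_right.smul_right _).exp_right
    refine ((hasDerivAt_exp_smul_neg (A + B) t).mul
      (hasDerivAt_exp_half_sq_smul (-c) t)).congr_deriv ?_
    simp only [K]
    rw [neg_mul, mul_assoc, hABc.eq]
    simp only [mul_add, mul_neg, mul_smul_comm, mul_assoc, smul_neg]
    abel
  have hKF := mul_eq_mul_of_hasDerivAt_mul_of_hasDerivAt_neg_mul hF hK 1 0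
  simp only [K, F, one_smul, one_pow, smul_neg, ne_eq, OfNat.ofNat_ne_zero, not_false_eq_true,
    zero_pow, zero_div, zero_smul, neg_zero, exp_zero, mul_one] at hKF
  calc exp A * exp B
      = exp ((1 / 2 : 𝕂) • c) * (exp (A + B) * exp (-(A + B))) * exp (-((1 / 2 : 𝕂) • c)) *
          (exp A * exp B) := by
        rw [exp_mul_exp_neg 𝕂, mul_one, exp_mul_exp_neg 𝕂, one_mul]
    _ = exp ((1 / 2 : 𝕂) • c) * exp (A + B) := by
        simp only [mul_assoc] at hKF ⊢
        rw [hKF, mul_one]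

end

/-- Special Baker–Campbell–Hausdorff identity: in a complex unital Banach algebra,
if `C = AB - BA` commutes with both `A` and `B`, then
`exp(A) exp(B) = exp(C/2) exp(A+B)`. -/
theorem special_bch {𝒜 : Type*} [NormedRing 𝒜] [NormedAlgebra ℂ 𝒜] [CompleteSpace 𝒜]
    (A B : 𝒜) (C : 𝒜) (hC : C = A * B - B * A)
    (hCA : C * A = A * C) (hCB : C * B = B * C) :
    NormedSpace.exp A * NormedSpace.exp B =
      NormedSpace.exp ((1 / 2 : ℂ) • C) * NormedSpace.exp (A + B) :=
  exp_mul_exp_eq_exp_half_smul_mul_exp_add hC.symm hCA.symm hCB.symm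
end
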